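/- arXiv:2510.08760 — 7 statements merged into one kernel-verified Lean document; each statement's English description precedes it below -/
import Mathlib

section
/- Suppose P(x) = x^r f(x^s) ∈ 𝔽_q[x] is a permutation polynomial over 𝔽_q. Then each A_i = f(ξ^i) is nonzero, and for every integer b such that γ^b = A_0·A_1⋯A_{l−1}, the integer l divides 2b; that is, l divides 2·Ind_γ(A_0 A_1 ⋯ A_{l−1}). -/
/-!
Over `𝔽_q^*` the permutation `P` has the same product as the identity, namely `-1` (Wilson).
Enumerating `𝔽_q^* = {γ^j}`, the values `(γ^j)^s = ξ^j` run `s` times through the `l`-th roots of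
unity, so the same product equals `(-1)^r (A_0 ⋯ A_{l-1})^s`. Hence `(A_0 ⋯ A_{l-1})^{2s} = 1`,
so `γ^{2bs} = 1` and `ls = q - 1` divides `2bs`.
-/

open Finset Polynomial Function

theorem Equiv.Perm.prod_erase_comp {α M : Type*} [Fintype α] [DecidableEq α] [CommMonoid M]
    (σ : Equiv.Perm α) {a : α} (ha : σ a = a) (g : α → M) :
    ∏ x ∈ univ.erase a, g (σ x) = ∏ x ∈ univ.erase a, g x :=
  σ.prod_comp _ g fun x hx => mem_erase.2 ⟨fun h => hx (h ▸ ha), mem_univ x⟩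

theorem FiniteField.prod_erase_zero_eq_neg_one (K : Type*) [Field K] [Fintype K] [DecidableEq K] :
    ∏ x ∈ univ.erase (0 : K), x = -1 := by
  have himage : univ.image ((↑) : Kˣ → K) = univ.erase 0 := by
    ext x
    simp [eq_comm]
  rw [← himage, prod_image fun u _ v _ => Units.ext, ← Units.coe_prod,
    FiniteField.prod_univ_units_id_eq_neg_one, Units.val_neg, Units.val_one]

theorem Finset.prod_range_mul_eq_pow_of_periodic {M : Type*} [CommMonoid M] {h : ℕ → M} {l : ℕ}
    (hh : Periodic h l) (s : ℕ) : ∏ j ∈ range (l * s), h j = (∏ j ∈ range l, h j) ^ s := by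
  induction s with
  | zero => simp
  | succ s ih =>
    rw [Nat.mul_succ, prod_range_add, ih, pow_succ]
    congr 1
    exact prod_congr rfl fun j _ => by rw [add_comm, mul_comm]; exact hh.nat_mul s j

theorem ne_zero_of_orderOf_eq_card_sub_one {G₀ : Type*} [GroupWithZero G₀] [Fintype G₀] {γ : G₀}
    (hγ : orderOf γ = Fintype.card G₀ - 1) : γ ≠ 0 := by
  rintro rfl
  have : 1 < Fintype.card G₀ := Fintype.one_lt_card
  rw [orderOf_zero] at hγ
  omega

theorem orderOf_dvd_iff_zpow_eq_one₀ {G₀ : Type*} [GroupWithZero G₀] {x : G₀} (hx : x ≠ 0)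
    {i : ℤ} : (orderOf x : ℤ) ∣ i ↔ x ^ i = 1 := by
  rw [← Units.val_mk0 hx, orderOf_units, orderOf_dvd_iff_zpow_eq_one, ← Units.val_zpow_eq_zpow_val,
    Units.val_eq_one]

theorem prod_erase_zero_eq_prod_range_pow {G₀ M : Type*} [GroupWithZero G₀] [Fintype G₀]
    [DecidableEq G₀] [CommMonoid M] {γ : G₀} (hγ : orderOf γ = Fintype.card G₀ - 1)
    (g : G₀ → M) : ∏ x ∈ univ.erase 0, g x = ∏ j ∈ range (Fintype.card G₀ - 1), g (γ ^ j) := by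
  have hγ0 := ne_zero_of_orderOf_eq_card_sub_one hγ
  have hinj : Set.InjOn (γ ^ ·) (range (Fintype.card G₀ - 1)) := by
    simpa [← hγ] using pow_injOn_Iio_orderOf (x := γ)
  have himage : (range (Fintype.card G₀ - 1)).image (γ ^ ·) = univ.erase 0 := by
    refine eq_of_subset_of_card_le (fun x hx => ?_) ?_
    · obtain ⟨j, -, rfl⟩ := mem_image.1 hx
      exact mem_erase.2 ⟨pow_ne_zero j hγ0, mem_univ _⟩
    · rw [card_image_of_injOn hinj, card_erase_of_mem (mem_univ 0), card_univ, card_range]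
  rw [← himage, prod_image hinj]

theorem prod_erase_zero_comp_pow {G₀ M : Type*} [GroupWithZero G₀] [Fintype G₀] [DecidableEq G₀]
    [CommMonoid M] {γ : G₀} (hγ : orderOf γ = Fintype.card G₀ - 1) {l s : ℕ}
    (hls : Fintype.card G₀ - 1 = l * s) (g : G₀ → M) :
    ∏ x ∈ univ.erase 0, g (x ^ s) = (∏ i ∈ range l, g ((γ ^ s) ^ i)) ^ s := by
  have hperiodic : Periodic (fun i => g ((γ ^ s) ^ i)) l := fun i => by
    dsimp only
    rw [pow_add, ← pow_mul γ s l, mul_comm s l, ← hls, ← hγ, pow_orderOf_eq_one, mul_one]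
  rw [prod_erase_zero_eq_prod_range_pow hγ, hls, ← prod_range_mul_eq_pow_of_periodic hperiodic]
  simp_rw [← pow_mul, mul_comm]

theorem FiniteField.neg_one_pow_mul_prod_eval_pow_eq_neg_one {K : Type*} [Field K] [Fintype K]
    {γ : K} (hγ : orderOf γ = Fintype.card K - 1) {l s : ℕ} (hls : Fintype.card K - 1 = l * s)
    {f : K[X]} {r : ℕ} (hr : r ≠ 0) (hP : Bijective fun x : K => x ^ r * f.eval (x ^ s)) :
    (-1) ^ r * (∏ i ∈ range l, f.eval ((γ ^ s) ^ i)) ^ s = -1 := by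
  classical
  set P := fun x : K => x ^ r * f.eval (x ^ s)
  have hP0 : P 0 = 0 := by simp [P, zero_pow hr]
  calc _ = (∏ x ∈ univ.erase 0, x) ^ r * ∏ x ∈ univ.erase 0, f.eval (x ^ s) := by
        rw [prod_erase_zero_eq_neg_one, prod_erase_zero_comp_pow hγ hls (f.eval ·)]
    _ = ∏ x ∈ univ.erase 0, P x := by simp only [P, prod_mul_distrib, prod_pow]
    _ = ∏ x ∈ univ.erase 0, x := Equiv.Perm.prod_erase_comp (.ofBijective P hP) hP0 id
    _ = -1 := prod_erase_zero_eq_neg_one K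

theorem stmt_1_general (q : ℕ) (F : Type*) [Field F] [Fintype F] (hF : Fintype.card F = q)
    (l s : ℕ) (hls : q - 1 = l * s)
    (γ : F) (hγ : orderOf γ = q - 1)
    (ξ : F) (hξ : ξ = γ ^ s)
    (f : Polynomial F) (r : ℕ) (hr : 0 < r)
    (A : ℕ → F) (hA : ∀ i, A i = f.eval (ξ ^ i))
    (hPP : Function.Bijective (fun x : F => x ^ r * f.eval (x ^ s))) :
    (∀ i ≤ l - 1, A i ≠ 0) ∧
    ∀ b : ℤ, γ ^ b = ∏ i ∈ Finset.range l, A i → (l : ℤ) ∣ 2 * b := by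
  subst hF hξ
  obtain rfl : A = fun i => f.eval ((γ ^ s) ^ i) := funext hA
  have hγ0 := ne_zero_of_orderOf_eq_card_sub_one hγ
  refine ⟨fun i _ hAi => pow_ne_zero i hγ0 (hPP.1 ?_), fun b hb => ?_⟩
  · show (γ ^ i) ^ r * f.eval ((γ ^ i) ^ s) = 0 ^ r * f.eval (0 ^ s)
    rw [zero_pow hr.ne', zero_mul, ← pow_mul γ i s, mul_comm i s, pow_mul]
    exact mul_eq_zero_of_right _ hAi
  set C := ∏ i ∈ range l, f.eval ((γ ^ s) ^ i)
  have hsq : (C ^ s) ^ 2 = 1 :=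
    calc (C ^ s) ^ 2 = ((-1) ^ r * C ^ s) ^ 2 := by
          rw [mul_pow, ← pow_mul (-1 : F) r 2, pow_mul', neg_one_sq, one_pow, one_mul]
      _ = 1 := by
          rw [FiniteField.neg_one_pow_mul_prod_eval_pow_eq_neg_one hγ hls hr.ne' hPP, neg_one_sq]
  have hdvd : ((l * s : ℕ) : ℤ) ∣ 2 * b * s := by
    rw [← hls, ← hγ, orderOf_dvd_iff_zpow_eq_one₀ hγ0,
      show 2 * b * s = b * (2 * s : ℕ) by push_cast; ring, zpow_mul, hb, zpow_natCast, pow_mul', hsq]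
  have hs : s ≠ 0 := by
    rintro rfl
    have : 1 < Fintype.card F := Fintype.one_lt_card
    omega
  exact (mul_dvd_mul_iff_right (Int.natCast_ne_zero.2 hs)).1 (by exact_mod_cast hdvd)

/-- If `P(x) = x^r f(x^s)` is a permutation polynomial over `𝔽_q`,
then each `A_i = f(ξ^i)` is nonzero, and for every integer `b` with
`γ^b = A_0 A_1 ⋯ A_{l-1}`, we have `l ∣ 2b`. -/
theorem stmt_1 (p m q : ℕ) (hp : p.Prime) (hm : 0 < m) (hq : q = p ^ m)
    (F : Type*) [Field F] [Fintype F] (hF : Fintype.card F = q)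
    (l s : ℕ) (hl : 0 < l) (hs : 0 < s) (hls : q - 1 = l * s)
    (γ : F) (hγ : orderOf γ = q - 1)
    (ξ : F) (hξ : ξ = γ ^ s)
    (f : Polynomial F) (r : ℕ) (hr : 0 < r)
    (A : ℕ → F) (hA : ∀ i, A i = f.eval (ξ ^ i))
    (hPP : Function.Bijective (fun x : F => x ^ r * f.eval (x ^ s))) :
    (∀ i ≤ l - 1, A i ≠ 0) ∧
    ∀ b : ℤ, γ ^ b = ∏ i ∈ Finset.range l, A i → (l : ℤ) ∣ 2 * b :=
  stmt_1_general q F hF l s hls γ hγ ξ hξ f r hr A hA hPP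
end

section
/- Assume gcd(r, s) = 1 and A_i ≠ 0 for all i = 0, 1, …, l − 1. Then P(x) = x^r f(x^s) is a permutation polynomial over 𝔽_q if and only if for all i, j with 0 ≤ i < j ≤ l − 1 and every integer b with γ^b = A_i · A_j^{−1}, one has b ≢ r(j − i) (mod l). -/
/-!
Write a nonzero `x` as `γ ^ c` and `A i = γ ^ (a i)`. Then
`P (γ ^ c) = γ ^ (c * r + a (c mod l))`, so `P` permutes `𝔽_q` iff
`φ c = c * r + a (c mod l)` is injective on `ℤ / (q - 1)`. Modulo `l`, `φ` becomes
`i ↦ i * r + a i` on `ℤ / l`, and since `r` is invertible modulo `s`, `φ` is injective modulo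
`l * s` iff it is injective modulo `l`. The latter is the stated condition, because every `b`
with `γ ^ b = A i / A j` is congruent to `a i - a j` modulo `q - 1`.
-/

open Function Polynomial

theorem Subgroup.mem_zpowers_of_orderOf_eq_natCard {G : Type*} [Group G] [Finite G] {g : G}
    (hg : orderOf g = Nat.card G) (x : G) : x ∈ Subgroup.zpowers g := by
  rw [Subgroup.eq_top_of_card_eq (Subgroup.zpowers g) (by rw [Nat.card_zpowers, hg])]
  exact Subgroup.mem_top x

theorem exists_zpow_eq_of_ne_zero {G₀ : Type*} [GroupWithZero G₀] {g : G₀ˣ}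
    (hg : ∀ x : G₀ˣ, x ∈ Subgroup.zpowers g) {x : G₀} (hx : x ≠ 0) :
    ∃ c : ℤ, ↑(g ^ c) = x := by
  obtain ⟨c, hc⟩ := Subgroup.mem_zpowers_iff.mp (hg (Units.mk0 x hx))
  exact ⟨c, by rw [hc, Units.val_mk0]⟩

def InjectiveMod (n : ℤ) (φ : ℤ → ℤ) : Prop :=
  ∀ c d, φ c ≡ φ d [ZMOD n] → c ≡ d [ZMOD n]

theorem bijective_iff_injectiveMod {G₀ : Type*} [GroupWithZero G₀] [Finite G₀]
    {P : G₀ → G₀} {g : G₀ˣ} (hg : ∀ x : G₀ˣ, x ∈ Subgroup.zpowers g)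
    (φ : ℤ → ℤ) (hP0 : P 0 = 0) (hP : ∀ c : ℤ, P ↑(g ^ c) = ↑(g ^ φ c)) :
    Bijective P ↔ InjectiveMod (orderOf g) φ := by
  have hzpow (c d : ℤ) : (↑(g ^ c) : G₀) = ↑(g ^ d) ↔ c ≡ d [ZMOD orderOf g] := by
    rw [Units.val_inj, zpow_eq_zpow_iff_modEq]
  have hcases (x : G₀) : x = 0 ∨ ∃ c : ℤ, ↑(g ^ c) = x :=
    or_iff_not_imp_left.mpr (exists_zpow_eq_of_ne_zero hg)
  rw [← Finite.injective_iff_bijective]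
  constructor
  · intro hinj c d h
    rw [← hzpow] at h ⊢
    exact hinj (by rw [hP, hP, h])
  · intro hφ x y hxy
    rcases hcases x with rfl | ⟨c, rfl⟩ <;> rcases hcases y with rfl | ⟨d, rfl⟩
    · rfl
    · exact absurd (hP0.symm.trans (hxy.trans (hP d))) (Units.ne_zero _).symm
    · exact absurd ((hP c).symm.trans (hxy.trans hP0)) (Units.ne_zero _)
    · rw [hP, hP, hzpow] at hxy
      exact (hzpow c d).mpr (hφ c d hxy)

theorem injectiveMod_mul_iff {l : ℕ} [NeZero l] {s r : ℤ} (hrs : IsCoprime r s)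
    (a : ZMod l → ℤ) :
    InjectiveMod (l * s) (fun c => c * r + a c) ↔ InjectiveMod l (fun c => c * r + a c) := by
  have ha {c d : ℤ} (h : c ≡ d [ZMOD l]) : a c = a d := by
    rw [(ZMod.intCast_eq_intCast_iff c d l).mpr h]
  constructor
  · intro h c d hcd
    obtain ⟨t, ht⟩ := hcd.dvd
    obtain ⟨x, y, hxy⟩ := hrs
    -- shifting `d` by `l * u` shifts its value by `l * u * r`; solve `u * r ≡ -t [ZMOD s]`
    have hd' : d + l * (-t * x) ≡ d [ZMOD l] := Int.add_mul_emod_self_left d l _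
    have hc : c ≡ d + l * (-t * x) [ZMOD l * s] := by
      refine h _ _ (Int.modEq_iff_dvd.mpr ⟨t * y, ?_⟩)
      dsimp only at ht ⊢
      rw [ha hd']
      linear_combination ht - (l * t) * hxy
    exact (hc.of_mul_right _).trans hd'
  · intro h c d hcd
    have hcdl : c ≡ d [ZMOD l] := h c d (hcd.of_mul_right _)
    obtain ⟨k, hk⟩ := hcdl.dvd
    obtain ⟨m, hm⟩ := hcd.dvd
    have hkr : s ∣ k * r := ⟨m, mul_left_cancel₀ (Int.natCast_ne_zero.mpr (NeZero.ne l)) <| by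
      dsimp only at hm
      rw [ha hcdl] at hm
      linear_combination hm - r * hk⟩
    obtain ⟨w, hw⟩ := hrs.symm.dvd_of_dvd_mul_right hkr
    exact Int.modEq_iff_dvd.mpr ⟨w, by rw [hk, hw, mul_assoc]⟩

theorem injectiveMod_iff_forall_lt {l : ℕ} [NeZero l] {ψ : ℤ → ℤ}
    (hψ : ∀ c d, c ≡ d [ZMOD l] → ψ c ≡ ψ d [ZMOD l]) :
    InjectiveMod l ψ ↔ ∀ i j : ℕ, i < j → j < l → ¬ ψ i ≡ ψ j [ZMOD l] := by
  have hrep (c : ℤ) : ((c : ZMod l).val : ℤ) ≡ c [ZMOD l] := by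
    rw [ZMod.val_intCast]
    exact Int.mod_modEq c l
  constructor
  · intro h i j hij hjl hψij
    exact hij.ne (Int.natCast_modEq_iff.mp (h i j hψij) |>.eq_of_lt_of_lt (hij.trans hjl) hjl)
  · intro h c d hcd
    have hψcd : ψ (c : ZMod l).val ≡ ψ (d : ZMod l).val [ZMOD l] :=
      (hψ _ _ (hrep c)).trans (hcd.trans (hψ _ _ (hrep d)).symm)
    rcases lt_trichotomy (c : ZMod l).val (d : ZMod l).val with hlt | heq | hgt
    · exact absurd hψcd (h _ _ hlt (ZMod.val_lt _))
    · exact (hrep c).symm.trans (heq ▸ hrep d)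
    · exact absurd hψcd.symm (h _ _ hgt (ZMod.val_lt _))

theorem forall_zpow_eq_not_modEq_iff {G : Type*} [Group G] {g : G} {n : ℤ} (hn : n ∣ orderOf g)
    (x k : ℤ) : (∀ b : ℤ, g ^ b = g ^ x → ¬ b ≡ k [ZMOD n]) ↔ ¬ x ≡ k [ZMOD n] :=
  ⟨fun h => h x rfl,
    fun h _ hb hbk => h (((zpow_eq_zpow_iff_modEq.mp hb).of_dvd hn).symm.trans hbk)⟩

theorem val_zpow_pow_mul_eval_pow {R : Type*} [CommRing R] {l s : ℕ} [NeZero l] {g : Rˣ}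
    (hg : orderOf g = l * s) (f : R[X]) (r : ℕ) {a : ZMod l → ℤ}
    (ha : ∀ k : ZMod l, (↑(g ^ a k) : R) = f.eval (((g : R) ^ s) ^ k.val)) (c : ℤ) :
    (↑(g ^ c) : R) ^ r * f.eval ((↑(g ^ c) : R) ^ s) = ↑(g ^ (c * r + a c)) := by
  have hpow : (g ^ c) ^ s = (g ^ s) ^ (c : ZMod l).val := by
    rw [← zpow_natCast, ← zpow_natCast, ← zpow_mul, ← zpow_natCast g s, ← zpow_mul,
      zpow_eq_zpow_iff_modEq, hg, ZMod.val_intCast, mul_comm (s : ℤ), Nat.cast_mul]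
    exact (Int.mod_modEq c l).symm.mul_right'
  have heval : f.eval ((↑(g ^ c) : R) ^ s) = ↑(g ^ a c) := by
    rw [← Units.val_pow_eq_pow_val, hpow, Units.val_pow_eq_pow_val, Units.val_pow_eq_pow_val,
      ha]
  rw [heval, ← Units.val_pow_eq_pow_val, ← Units.val_mul, ← zpow_natCast, ← zpow_mul,
    ← zpow_add]

theorem stmt_4_general (q : ℕ)
    (F : Type*) [Field F] [Fintype F] (hF : Fintype.card F = q)
    (l s : ℕ) (hl : 0 < l) (hs : 0 < s) (hls : q - 1 = l * s)
    (γ : F) (hγ : orderOf γ = q - 1)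
    (ξ : F) (hξ : ξ = γ ^ s)
    (f : Polynomial F) (r : ℕ) (hr : 0 < r)
    (A : ℕ → F) (hA : ∀ i, A i = f.eval (ξ ^ i))
    (hrs : Nat.gcd r s = 1)
    (hA0 : ∀ i ≤ l - 1, A i ≠ 0) :
    Function.Bijective (fun x : F => x ^ r * f.eval (x ^ s)) ↔
      ∀ i j : ℕ, i < j → j ≤ l - 1 →
        ∀ b : ℤ, γ ^ b = A i * (A j)⁻¹ →
          ¬ (b ≡ (r : ℤ) * ((j : ℤ) - (i : ℤ)) [ZMOD (l : ℤ)]) := by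
  classical
  have : NeZero l := ⟨hl.ne'⟩
  obtain ⟨g, rfl⟩ : IsUnit γ := (orderOf_pos_iff.mp (by rw [hγ, hls]; positivity)).isUnit
  rw [orderOf_units, hls] at hγ
  subst hξ
  have hgen := Subgroup.mem_zpowers_of_orderOf_eq_natCard
    (hγ.trans (by rw [Nat.card_eq_fintype_card, Fintype.card_units, hF, hls]))
  choose a ha using fun k : ZMod l =>
    exists_zpow_eq_of_ne_zero hgen (hA0 k.val (Nat.le_sub_one_of_lt k.val_lt))
  rw [bijective_iff_injectiveMod (P := fun x : F => x ^ r * f.eval (x ^ s)) hgen _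
      (by simp [hr.ne']) (val_zpow_pow_mul_eval_pow hγ f r fun k => (ha k).trans (hA _)),
    hγ, Nat.cast_mul, injectiveMod_mul_iff (Nat.isCoprime_iff_coprime.mpr hrs),
    injectiveMod_iff_forall_lt fun c d h => by
      rw [(ZMod.intCast_eq_intCast_iff c d l).mpr h]; exact (h.mul_right _).add_right _]
  refine forall₂_congr fun i j => forall_congr' fun hij => ?_
  rw [show j ≤ l - 1 ↔ j < l by omega]
  refine forall_congr' fun hjl => ?_
  have hAval (k : ℕ) (hk : k < l) : A k = ↑(g ^ a k) := by rw [ha, ZMod.val_cast_of_lt hk]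
  have hquot : A i * (A j)⁻¹ = ↑(g ^ (a i - a j)) := by
    rw [zpow_sub, Units.val_mul, Units.val_inv_eq_inv_val, hAval i (hij.trans hjl), hAval j hjl]
  simp only [← Units.val_zpow_eq_zpow_val, hquot, Units.val_inj, Int.cast_natCast]
  have hl_dvd : (l : ℤ) ∣ orderOf g := by
    rw [hγ]; exact Int.natCast_dvd_natCast.mpr (dvd_mul_right l s)
  rw [forall_zpow_eq_not_modEq_iff hl_dvd, Int.modEq_iff_dvd, Int.modEq_iff_dvd,
    show (r : ℤ) * (j - i) - (a i - a j) = j * r + a j - (i * r + a i) by ring]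

/-- Assume `gcd(r,s) = 1` and all `A_i ≠ 0`. Then `P(x) = x^r f(x^s)`
is a permutation polynomial over `𝔽_q` iff for all `0 ≤ i < j ≤ l-1` and every
integer `b` with `γ^b = A_i · A_j⁻¹`, one has `b ≢ r(j - i) (mod l)`. -/
theorem stmt_4 (p m q : ℕ) (hp : p.Prime) (hm : 0 < m) (hq : q = p ^ m)
    (F : Type*) [Field F] [Fintype F] (hF : Fintype.card F = q)
    (l s : ℕ) (hl : 0 < l) (hs : 0 < s) (hls : q - 1 = l * s)
    (γ : F) (hγ : orderOf γ = q - 1)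
    (ξ : F) (hξ : ξ = γ ^ s)
    (f : Polynomial F) (r : ℕ) (hr : 0 < r)
    (A : ℕ → F) (hA : ∀ i, A i = f.eval (ξ ^ i))
    (hrs : Nat.gcd r s = 1)
    (hA0 : ∀ i ≤ l - 1, A i ≠ 0) :
    Function.Bijective (fun x : F => x ^ r * f.eval (x ^ s)) ↔
      ∀ i j : ℕ, i < j → j ≤ l - 1 →
        ∀ b : ℤ, γ ^ b = A i * (A j)⁻¹ →
          ¬ (b ≡ (r : ℤ) * ((j : ℤ) - (i : ℤ)) [ZMOD (l : ℤ)]) :=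
  stmt_4_general q F hF l s hl hs hls γ hγ ξ hξ f r hr A hA hrs hA0
end

section
/- Assume gcd(r, s) = 1 and A_i ≠ 0 for all i = 0, 1, …, l − 1. Then P(x) = x^r f(x^s) is a permutation polynomial over 𝔽_q if and only if the set { A_0^s, A_1^s·ξ^r, A_2^s·ξ^{2r}, …, A_{l−1}^s·ξ^{(l−1)r} } consists of l pairwise distinct elements and equals the set of all l-th roots of unity in 𝔽_q. -/
/-!
For `x ≠ 0` we have `(x ^ r * f(x ^ s)) ^ s = g(x ^ s)` with `g(y) = y ^ r * f(y) ^ s`, and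
`x ↦ x ^ s` maps `𝔽_q^*` onto the group `μ_l` of `l`-th roots of unity, whose elements are the
`ξ ^ i` with `i < l`. If `P` is a bijection, then `g` maps `μ_l` onto the finite set `μ_l`, hence
bijectively. Conversely, if `g` is injective on `μ_l`, then `P x = P y` forces `x ^ s = y ^ s`,
then `x ^ r = y ^ r`, and `x = y` because `gcd(r, s) = 1`.
-/

open Set Polynomial

theorem Set.bijOn_iff_injOn_and_image_eq {α β : Type*} {f : α → β} {s : Set α} {t : Set β} :
    BijOn f s t ↔ InjOn f s ∧ f '' s = t :=
  ⟨fun h => ⟨h.injOn, h.image_eq⟩, fun ⟨hi, he⟩ => he ▸ hi.bijOn_image⟩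

theorem eq_of_pow_eq_pow_of_coprime {G₀ : Type*} [CommGroupWithZero G₀] {x y : G₀} {r s : ℕ}
    (hrs : r.Coprime s) (hy : y ≠ 0) (hr : x ^ r = y ^ r) (hs : x ^ s = y ^ s) : x = y := by
  have hr' : (x / y) ^ r = 1 := by rw [div_pow, hr, div_self (pow_ne_zero r hy)]
  have hs' : (x / y) ^ s = 1 := by rw [div_pow, hs, div_self (pow_ne_zero s hy)]
  exact (div_eq_one_iff_eq hy).mp ((pow_eq_one_iff_of_coprime hrs).mp ⟨hr', hs'⟩)

theorem IsPrimitiveRoot.bijOn_pow_Iio {R : Type*} [CommRing R] [IsDomain R] {ζ : R} {k : ℕ}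
    (hζ : IsPrimitiveRoot ζ k) (hk : 0 < k) : BijOn (ζ ^ ·) (Iio k) {x | x ^ k = 1} := by
  have : NeZero k := ⟨hk.ne'⟩
  refine ⟨fun i _ => ?_, fun i hi j hj => hζ.pow_inj hi hj, fun y hy => hζ.eq_pow_of_pow_eq_one hy⟩
  rw [mem_ofPred_eq, ← pow_mul, mul_comm, pow_mul, hζ.pow_eq_one, one_pow]

theorem exists_pow_eq_of_pow_eq_one {R : Type*} [CommRing R] [IsDomain R] {γ y : R} {l s : ℕ}
    (hγ : IsPrimitiveRoot γ (l * s)) (hl : 0 < l) (hs : 0 < s) (hy : y ^ l = 1) :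
    ∃ x, x ^ s = y := by
  have hξ : IsPrimitiveRoot (γ ^ s) l := hγ.pow (Nat.mul_pos hl hs) (mul_comm l s)
  obtain ⟨i, -, rfl⟩ := (hξ.bijOn_pow_Iio hl).surjOn hy
  exact ⟨γ ^ i, by rw [← pow_mul, mul_comm, pow_mul]⟩

theorem pow_mul_eval_pow_pow {R : Type*} [CommSemiring R] (f : R[X]) (r s : ℕ) (x : R) :
    (x ^ r * f.eval (x ^ s)) ^ s = (x ^ s) ^ r * f.eval (x ^ s) ^ s := by
  ring

section FiniteField

variable {F : Type*} [Field F] [Fintype F] {l s r : ℕ} {f : F[X]}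

theorem pow_pow_eq_one_of_card_sub_one (hcard : Fintype.card F - 1 = l * s) {x : F}
    (hx : x ≠ 0) : (x ^ s) ^ l = 1 := by
  rw [← pow_mul, mul_comm, ← hcard, FiniteField.pow_card_sub_one_eq_one x hx]

theorem pow_mul_eval_pow_ne_zero (hcard : Fintype.card F - 1 = l * s)
    (hf : ∀ y : F, y ^ l = 1 → f.eval y ≠ 0) {x : F} (hx : x ≠ 0) :
    x ^ r * f.eval (x ^ s) ≠ 0 :=
  mul_ne_zero (pow_ne_zero r hx) (hf _ (pow_pow_eq_one_of_card_sub_one hcard hx))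

theorem mapsTo_pow_mul_eval_pow (hcard : Fintype.card F - 1 = l * s)
    (hf : ∀ y : F, y ^ l = 1 → f.eval y ≠ 0) :
    MapsTo (fun y => y ^ r * f.eval y ^ s) {y : F | y ^ l = 1} {y | y ^ l = 1} := by
  intro y hy
  have hfy : f.eval y ^ (s * l) = 1 := by
    rw [mul_comm, ← hcard]
    exact FiniteField.pow_card_sub_one_eq_one _ (hf y hy)
  simp only [mem_ofPred_eq] at hy ⊢
  rw [mul_pow, ← pow_mul, mul_comm r l, pow_mul, hy, one_pow, one_mul, ← pow_mul, hfy]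

theorem bijOn_pow_mul_eval_pow_of_bijective (hcard : Fintype.card F - 1 = l * s) {γ : F}
    (hγ : IsPrimitiveRoot γ (l * s)) (hl : 0 < l) (hs : 0 < s) (hr : 0 < r)
    (hf : ∀ y : F, y ^ l = 1 → f.eval y ≠ 0)
    (hP : Function.Bijective fun x : F => x ^ r * f.eval (x ^ s)) :
    BijOn (fun y => y ^ r * f.eval y ^ s) {y : F | y ^ l = 1} {y | y ^ l = 1} := by
  have hmaps := mapsTo_pow_mul_eval_pow (r := r) hcard hf
  refine ((toFinite _).surjOn_iff_bijOn_of_mapsTo hmaps).mp fun z hz => ?_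
  obtain ⟨w, rfl⟩ := exists_pow_eq_of_pow_eq_one hγ hl hs hz
  have hw : w ≠ 0 := by
    rintro rfl
    simp [zero_pow hs.ne', zero_pow hl.ne'] at hz
  obtain ⟨x, rfl⟩ := hP.surjective w
  have hx : x ≠ 0 := by
    rintro rfl
    simp [zero_pow hr.ne'] at hw
  exact ⟨x ^ s, pow_pow_eq_one_of_card_sub_one hcard hx, (pow_mul_eval_pow_pow f r s x).symm⟩

theorem bijective_pow_mul_eval_pow_of_injOn (hcard : Fintype.card F - 1 = l * s) (hr : 0 < r)
    (hrs : r.Coprime s) (hf : ∀ y : F, y ^ l = 1 → f.eval y ≠ 0)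
    (hg : InjOn (fun y => y ^ r * f.eval y ^ s) {y : F | y ^ l = 1}) :
    Function.Bijective fun x : F => x ^ r * f.eval (x ^ s) := by
  have hP0 : (0 : F) ^ r * f.eval (0 ^ s) = 0 := by simp [zero_pow hr.ne']
  rw [← Finite.injective_iff_bijective]
  intro x y hxy
  simp only at hxy
  rcases eq_or_ne x 0 with rfl | hx
  · by_contra hy
    exact pow_mul_eval_pow_ne_zero hcard hf (Ne.symm hy) (hxy ▸ hP0)
  rcases eq_or_ne y 0 with rfl | hy
  · exact absurd (hxy.trans hP0) (pow_mul_eval_pow_ne_zero hcard hf hx)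
  have hxs : x ^ s = y ^ s := by
    refine hg (pow_pow_eq_one_of_card_sub_one hcard hx) (pow_pow_eq_one_of_card_sub_one hcard hy) ?_
    simp only [← pow_mul_eval_pow_pow, hxy]
  rw [hxs] at hxy
  have hxr : x ^ r = y ^ r :=
    mul_right_cancel₀ (hf _ (pow_pow_eq_one_of_card_sub_one hcard hy)) hxy
  exact eq_of_pow_eq_pow_of_coprime hrs hy hxr hxs

end FiniteField

theorem stmt_5_general (q : ℕ)
    (F : Type*) [Field F] [Fintype F] (hF : Fintype.card F = q)
    (l s : ℕ) (hl : 0 < l) (hs : 0 < s) (hls : q - 1 = l * s)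
    (γ : F) (hγ : orderOf γ = q - 1)
    (ξ : F) (hξ : ξ = γ ^ s)
    (f : Polynomial F) (r : ℕ) (hr : 0 < r)
    (A : ℕ → F) (hA : ∀ i, A i = f.eval (ξ ^ i))
    (hrs : Nat.gcd r s = 1)
    (hA0 : ∀ i ≤ l - 1, A i ≠ 0) :
    Function.Bijective (fun x : F => x ^ r * f.eval (x ^ s)) ↔
      (Set.InjOn (fun i : ℕ => A i ^ s * ξ ^ (i * r)) (Set.Iio l) ∧
       (fun i : ℕ => A i ^ s * ξ ^ (i * r)) '' (Set.Iio l) = {x : F | x ^ l = 1}) := by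
  subst hF
  have hγ' : IsPrimitiveRoot γ (l * s) := hls ▸ IsPrimitiveRoot.iff_orderOf.mpr hγ
  have hξ' : IsPrimitiveRoot ξ l := hξ ▸ hγ'.pow (Nat.mul_pos hl hs) (mul_comm l s)
  have he := hξ'.bijOn_pow_Iio hl
  have hf : ∀ y : F, y ^ l = 1 → f.eval y ≠ 0 :=
    he.forall.mpr fun i hi => hA i ▸ hA0 i (by simp only [mem_Iio] at hi; omega)
  have hAξ : (fun i : ℕ => A i ^ s * ξ ^ (i * r)) = (fun y => y ^ r * f.eval y ^ s) ∘ (ξ ^ ·) := by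
    funext i
    rw [Function.comp_apply, hA, pow_mul ξ i r]
    exact mul_comm _ _
  rw [hAξ, ← bijOn_iff_injOn_and_image_eq, bijOn_comp_iff he.injOn, he.image_eq]
  exact ⟨bijOn_pow_mul_eval_pow_of_bijective hls hγ' hl hs hr hf,
    fun hg => bijective_pow_mul_eval_pow_of_injOn hls hr hrs hf hg.injOn⟩

/-- Assume `gcd(r,s) = 1` and all `A_i ≠ 0`. Then `P(x) = x^r f(x^s)`
is a permutation polynomial over `𝔽_q` iff the elements
`A_0^s, A_1^s ξ^r, …, A_{l-1}^s ξ^{(l-1)r}` are pairwise distinct and form exactly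
the set of all `l`-th roots of unity in `𝔽_q`. -/
theorem stmt_5 (p m q : ℕ) (hp : p.Prime) (hm : 0 < m) (hq : q = p ^ m)
    (F : Type*) [Field F] [Fintype F] (hF : Fintype.card F = q)
    (l s : ℕ) (hl : 0 < l) (hs : 0 < s) (hls : q - 1 = l * s)
    (γ : F) (hγ : orderOf γ = q - 1)
    (ξ : F) (hξ : ξ = γ ^ s)
    (f : Polynomial F) (r : ℕ) (hr : 0 < r)
    (A : ℕ → F) (hA : ∀ i, A i = f.eval (ξ ^ i))
    (hrs : Nat.gcd r s = 1)
    (hA0 : ∀ i ≤ l - 1, A i ≠ 0) :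
    Function.Bijective (fun x : F => x ^ r * f.eval (x ^ s)) ↔
      (Set.InjOn (fun i : ℕ => A i ^ s * ξ ^ (i * r)) (Set.Iio l) ∧
       (fun i : ℕ => A i ^ s * ξ ^ (i * r)) '' (Set.Iio l) = {x : F | x ^ l = 1}) :=
  stmt_5_general q F hF l s hl hs hls γ hγ ξ hξ f r hr A hA hrs hA0
end

section
/- Assume gcd(r, s) = 1 and A_i ≠ 0 for all i = 0, 1, …, l − 1. Then P(x) = x^r f(x^s) is a permutation polynomial over 𝔽_q if and only if for all i, j with 0 ≤ i < j ≤ l − 1, the element (A_i · γ^{ir}) · (A_j · γ^{jr})^{−1} is not an l-th power in 𝔽_q^*; equivalently, the elements A_0, A_1·γ^r, A_2·γ^{2r}, …, A_{l−1}·γ^{(l−1)r} lie in pairwise distinct cosets of the subgroup C_0 of l-th powers in 𝔽_q^*. -/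
/-!
Write a nonzero `x ∈ 𝔽_q` as `x = γ^i w^l` with `0 ≤ i < l`. Since `w^(ls) = 1`, the argument of
`f` is `x^s = ξ^i`, so `P(γ^i w^l) = A_i γ^(ir) · (w^l)^r`. As `r` is invertible modulo `s = |C_0|`,
raising to the `r`-th power permutes `C_0`; hence `P` maps the coset `γ^i C_0` bijectively onto the
coset `A_i γ^(ir) C_0`, and `P` permutes `𝔽_q` exactly when these `l` image cosets are distinct.
-/

section CommMonoid

variable {M : Type*} [CommMonoid M]

theorem exists_pow_pow_eq_self_of_coprime {r s : ℕ} (hrs : r.Coprime s) (hs : s ≠ 0) :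
    ∃ m : ℕ, ∀ z : M, z ^ s = 1 → (z ^ r) ^ m = z := by
  obtain ⟨m, -, hm⟩ := Nat.exists_mul_mod_eq_of_coprime 1 hrs hs
  exact ⟨m, fun z hz => by rw [← pow_mul, pow_eq_pow_mod _ hz, hm, ← pow_eq_pow_mod _ hz, pow_one]⟩

theorem eq_of_pow_eq_pow_of_coprime_s7 {r s : ℕ} (hrs : r.Coprime s) (hs : s ≠ 0) {z z' : M}
    (hz : z ^ s = 1) (hz' : z' ^ s = 1) (h : z ^ r = z' ^ r) : z = z' := by
  obtain ⟨m, hm⟩ := exists_pow_pow_eq_self_of_coprime (M := M) hrs hs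
  rw [← hm z hz, ← hm z' hz', h]

theorem apply_pow_mul_pow (g : M → M) {l s : ℕ} (r i : ℕ) (γ : M) {w : M}
    (hw : w ^ (l * s) = 1) :
    (γ ^ i * w ^ l) ^ r * g ((γ ^ i * w ^ l) ^ s) =
      g ((γ ^ s) ^ i) * γ ^ (i * r) * (w ^ r) ^ l := by
  rw [mul_pow, mul_pow, ← pow_mul w l s, hw, mul_one, pow_right_comm γ i s, ← pow_mul γ i r,
    pow_right_comm w l r, ← mul_rotate]

end CommMonoid

section PrimitiveRoot

variable {F : Type*} [Field F] {γ : F} {l s r : ℕ} (g : F → F)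

theorem exists_pow_mul_pow_eq (hγ : IsPrimitiveRoot γ (l * s)) (hls : l * s ≠ 0) {x : F}
    (hx : x ^ (l * s) = 1) : ∃ i < l, ∃ w : F, w ^ (l * s) = 1 ∧ γ ^ i * w ^ l = x := by
  have : NeZero (l * s) := ⟨hls⟩
  obtain ⟨k, -, rfl⟩ := hγ.eq_pow_of_pow_eq_one hx
  refine ⟨k % l, Nat.mod_lt _ (Nat.pos_of_ne_zero (left_ne_zero_of_mul hls)), γ ^ (k / l), ?_, ?_⟩
  · rw [← pow_mul, mul_comm, pow_mul, hγ.pow_eq_one, one_pow]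
  · rw [← pow_mul, ← pow_add, mul_comm, Nat.mod_add_div]

theorem modEq_of_pow_mul_pow_eq (hγ : IsPrimitiveRoot γ (l * s)) (hls : l * s ≠ 0) {w : F}
    (hw : w ^ (l * s) = 1) {i j : ℕ} (h : γ ^ j * w ^ l = γ ^ i) : j ≡ i [MOD l] := by
  have : NeZero (l * s) := ⟨hls⟩
  obtain ⟨t, -, rfl⟩ := hγ.eq_pow_of_pow_eq_one hw
  rw [← pow_mul, ← pow_add, (hγ.isOfFinOrder hls).pow_eq_pow_iff_modEq, ← hγ.eq_orderOf] at h
  calc j ≡ j + t * l [MOD l] := by simp [Nat.ModEq]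
    _ ≡ i [MOD l] := h.of_mul_right s

theorem pow_mul_pow_eq_of_apply_eq (hγ : IsPrimitiveRoot γ (l * s)) (hls : l * s ≠ 0)
    (hrs : r.Coprime s) (hg : ∀ i < l, g ((γ ^ s) ^ i) ≠ 0)
    (hC : ∀ i j : ℕ, i < j → j < l → ∀ y : F, y ≠ 0 →
      g ((γ ^ s) ^ i) * γ ^ (i * r) * (g ((γ ^ s) ^ j) * γ ^ (j * r))⁻¹ ≠ y ^ l)
    {i j : ℕ} (hi : i < l) (hj : j < l) {w v : F} (hw : w ^ (l * s) = 1) (hv : v ^ (l * s) = 1)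
    (h : (γ ^ i * w ^ l) ^ r * g ((γ ^ i * w ^ l) ^ s) =
      (γ ^ j * v ^ l) ^ r * g ((γ ^ j * v ^ l) ^ s)) :
    γ ^ i * w ^ l = γ ^ j * v ^ l := by
  have hB : ∀ k < l, g ((γ ^ s) ^ k) * γ ^ (k * r) ≠ 0 := fun k hk =>
    mul_ne_zero (hg k hk) (pow_ne_zero _ (hγ.ne_zero hls))
  have hne : ∀ {u : F}, u ^ (l * s) = 1 → u ≠ 0 := fun hu => ne_zero_pow hls (hu ▸ one_ne_zero)
  rw [apply_pow_mul_pow g r i γ hw, apply_pow_mul_pow g r j γ hv] at h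
  have hdistinct : ∀ {a b : ℕ} {c d : F}, a < b → b < l → c ≠ 0 → d ≠ 0 →
      g ((γ ^ s) ^ a) * γ ^ (a * r) * (c ^ r) ^ l ≠
        g ((γ ^ s) ^ b) * γ ^ (b * r) * (d ^ r) ^ l := by
    intro a b c d hab hb hc hd he
    refine hC a b hab hb (d ^ r * (c ^ r)⁻¹) (by simp [hc, hd]) ?_
    rw [mul_pow, inv_pow, ← div_eq_mul_inv, ← div_eq_mul_inv,
      div_eq_div_iff (hB b hb) (pow_ne_zero _ (pow_ne_zero _ hc)), he]
    ring
  obtain rfl : i = j := by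
    rcases lt_trichotomy i j with hij | hij | hij
    · exact (hdistinct hij hj (hne hw) (hne hv) h).elim
    · exact hij
    · exact (hdistinct hij hi (hne hv) (hne hw) h.symm).elim
  have hwv : (w ^ l) ^ r = (v ^ l) ^ r := by
    rw [← pow_right_comm w r l, ← pow_right_comm v r l]
    exact mul_left_cancel₀ (hB i hi) h
  have htors : ∀ {u : F}, u ^ (l * s) = 1 → (u ^ l) ^ s = 1 := fun hu => by rw [← pow_mul, hu]
  rw [eq_of_pow_eq_pow_of_coprime_s7 hrs (right_ne_zero_of_mul hls) (htors hw) (htors hv) hwv]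

end PrimitiveRoot

section FiniteField

variable {F : Type*} [Field F] [Fintype F] {l s r : ℕ} {γ : F} (g : F → F)

theorem modEq_of_mul_inv_eq_pow (hcard : Fintype.card F - 1 = l * s)
    (hγ : IsPrimitiveRoot γ (l * s)) (hrs : r.Coprime s) {i j : ℕ}
    (hj : g ((γ ^ s) ^ j) ≠ 0) (hP : Function.Injective fun x : F => x ^ r * g (x ^ s))
    {y : F} (hy : y ≠ 0)
    (h : g ((γ ^ s) ^ i) * γ ^ (i * r) * (g ((γ ^ s) ^ j) * γ ^ (j * r))⁻¹ = y ^ l) :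
    i ≡ j [MOD l] := by
  have hls : l * s ≠ 0 := hcard ▸ (Nat.sub_pos_of_lt Fintype.one_lt_card).ne'
  have hyls : y ^ (l * s) = 1 := hcard ▸ FiniteField.pow_card_sub_one_eq_one y hy
  obtain ⟨m, hm⟩ := exists_pow_pow_eq_self_of_coprime (M := F) hrs (right_ne_zero_of_mul hls)
  have hw : (y ^ m) ^ (l * s) = 1 := by rw [← pow_mul, mul_comm, pow_mul, hyls, one_pow]
  -- `y ^ l` lies in the `s`-torsion, on which `(· ^ r) ^ m` is the identity
  have hwl : ((y ^ m) ^ r) ^ l = y ^ l := by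
    rw [← pow_mul, ← pow_mul, show m * (r * l) = l * r * m by ring, pow_mul, pow_mul]
    exact hm _ (by rw [← pow_mul, hyls])
  have hBj : g ((γ ^ s) ^ j) * γ ^ (j * r) ≠ 0 :=
    mul_ne_zero hj (pow_ne_zero _ (hγ.ne_zero hls))
  have hcoll : γ ^ j * (y ^ m) ^ l = γ ^ i * 1 ^ l := hP <| by
    simp only
    rw [apply_pow_mul_pow g r j γ hw, apply_pow_mul_pow g r i γ (one_pow _), hwl, ← h, one_pow,
      one_pow, mul_one, mul_comm, inv_mul_cancel_right₀ hBj]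
  rw [one_pow, mul_one] at hcoll
  exact (modEq_of_pow_mul_pow_eq hγ hls hw hcoll).symm

theorem injective_of_forall_mul_inv_ne_pow (hcard : Fintype.card F - 1 = l * s)
    (hγ : IsPrimitiveRoot γ (l * s)) (hr : r ≠ 0) (hrs : r.Coprime s)
    (hg : ∀ i < l, g ((γ ^ s) ^ i) ≠ 0)
    (hC : ∀ i j : ℕ, i < j → j < l → ∀ y : F, y ≠ 0 →
      g ((γ ^ s) ^ i) * γ ^ (i * r) * (g ((γ ^ s) ^ j) * γ ^ (j * r))⁻¹ ≠ y ^ l) :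
    Function.Injective fun x : F => x ^ r * g (x ^ s) := by
  have hls : l * s ≠ 0 := hcard ▸ (Nat.sub_pos_of_lt Fintype.one_lt_card).ne'
  have hrep : ∀ x : F, x ≠ 0 → ∃ i < l, ∃ w : F, w ^ (l * s) = 1 ∧ γ ^ i * w ^ l = x :=
    fun x hx => exists_pow_mul_pow_eq hγ hls (hcard ▸ FiniteField.pow_card_sub_one_eq_one x hx)
  have hne : ∀ x : F, x ≠ 0 → x ^ r * g (x ^ s) ≠ 0 := by
    intro x hx
    obtain ⟨i, hi, w, hw, rfl⟩ := hrep x hx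
    rw [apply_pow_mul_pow g r i γ hw, pow_right_comm w r l]
    exact mul_ne_zero (mul_ne_zero (hg i hi) (pow_ne_zero _ (hγ.ne_zero hls)))
      (pow_ne_zero _ (right_ne_zero_of_mul hx))
  intro x x' hxx'
  simp only at hxx'
  rcases eq_or_ne x 0 with rfl | hx <;> rcases eq_or_ne x' 0 with rfl | hx'
  · rfl
  · exact absurd (by rw [← hxx', zero_pow hr, zero_mul]) (hne x' hx')
  · exact absurd (by rw [hxx', zero_pow hr, zero_mul]) (hne x hx)
  · obtain ⟨i, hi, w, hw, rfl⟩ := hrep x hx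
    obtain ⟨j, hj, v, hv, rfl⟩ := hrep x' hx'
    exact pow_mul_pow_eq_of_apply_eq g hγ hls hrs hg hC hi hj hw hv hxx'

end FiniteField

theorem stmt_7_general (q : ℕ)
    (F : Type*) [Field F] [Fintype F] (hF : Fintype.card F = q)
    (l s : ℕ) (hl : 0 < l) (hls : q - 1 = l * s)
    (γ : F) (hγ : orderOf γ = q - 1)
    (ξ : F) (hξ : ξ = γ ^ s)
    (f : Polynomial F) (r : ℕ) (hr : 0 < r)
    (A : ℕ → F) (hA : ∀ i, A i = f.eval (ξ ^ i))
    (hrs : Nat.gcd r s = 1)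
    (hA0 : ∀ i ≤ l - 1, A i ≠ 0) :
    Function.Bijective (fun x : F => x ^ r * f.eval (x ^ s)) ↔
      ∀ i j : ℕ, i < j → j ≤ l - 1 →
        ¬ ∃ y : F, y ≠ 0 ∧ (A i * γ ^ (i * r)) * (A j * γ ^ (j * r))⁻¹ = y ^ l := by
  have hcard : Fintype.card F - 1 = l * s := hF ▸ hls
  have hprim : IsPrimitiveRoot γ (l * s) := hls ▸ hγ ▸ IsPrimitiveRoot.orderOf γ
  have hf : ∀ i < l, f.eval ((γ ^ s) ^ i) ≠ 0 := fun i hi => hξ ▸ hA i ▸ hA0 i (by omega)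
  simp only [hA, hξ]
  constructor
  · rintro hP i j hij hj ⟨y, hy, h⟩
    have hmod := modEq_of_mul_inv_eq_pow f.eval hcard hprim hrs (hf j (by omega)) hP.injective hy h
    exact hij.ne (hmod.eq_of_lt_of_lt (by omega) (by omega))
  · intro hC
    apply Function.Injective.bijective_of_finite
    exact injective_of_forall_mul_inv_ne_pow f.eval hcard hprim hr.ne' hrs hf
      fun i j hij hj y hy h => hC i j hij (by omega) ⟨y, hy, h⟩

/-- Assume `gcd(r,s) = 1` and all `A_i ≠ 0`. Then `P(x) = x^r f(x^s)`
is a permutation polynomial over `𝔽_q` iff for all `0 ≤ i < j ≤ l-1`, the element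
`(A_i γ^{ir}) · (A_j γ^{jr})⁻¹` is not an `l`-th power in `𝔽_q^*`; i.e. the elements
`A_0, A_1 γ^r, …, A_{l-1} γ^{(l-1)r}` lie in pairwise distinct cosets of the subgroup
`C_0` of `l`-th powers. -/
theorem stmt_7 (p m q : ℕ) (hp : p.Prime) (hm : 0 < m) (hq : q = p ^ m)
    (F : Type*) [Field F] [Fintype F] (hF : Fintype.card F = q)
    (l s : ℕ) (hl : 0 < l) (hs : 0 < s) (hls : q - 1 = l * s)
    (γ : F) (hγ : orderOf γ = q - 1)
    (ξ : F) (hξ : ξ = γ ^ s)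
    (f : Polynomial F) (r : ℕ) (hr : 0 < r)
    (A : ℕ → F) (hA : ∀ i, A i = f.eval (ξ ^ i))
    (hrs : Nat.gcd r s = 1)
    (hA0 : ∀ i ≤ l - 1, A i ≠ 0) :
    Function.Bijective (fun x : F => x ^ r * f.eval (x ^ s)) ↔
      ∀ i j : ℕ, i < j → j ≤ l - 1 →
        ¬ ∃ y : F, y ≠ 0 ∧ (A i * γ ^ (i * r)) * (A j * γ ^ (j * r))⁻¹ = y ^ l :=
  stmt_7_general q F hF l s hl hls γ hγ ξ hξ f r hr A hA hrs hA0
end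

section
/- Suppose q − 1 = 3s for a positive integer s, and let f(x) = a·x^2 + b·x + c ∈ 𝔽_q[x] with a^2 + b^2 + c^2 − ab − bc − ca = 1. Let r be a positive integer and set A_i = f(ξ^i) for i = 0, 1, 2, where ξ = γ^s is a primitive cube root of unity. Then P(x) = x^r f(x^s) is a permutation polynomial over 𝔽_q if and only if: gcd(r, s) = 1, A_i ≠ 0 for i = 0, 1, 2, A_0^s = 1, 3 divides Ind_γ(A_0) (i.e., for every integer b with γ^b = A_0, 3 ∣ b), and 3 does not divide r + Ind_γ(A_2^2) (i.e., for every integer b with γ^b = A_2^2, 3 ∤ (r + b)). -/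
open Polynomial

/-!
Write a nonzero `x` as `γ ^ k` with `k : ZMod (3 * s)` and choose `α i` with
`γ ^ α i = f (ξ ^ i)`. On exponents, `x ↦ x ^ r f (x ^ s)` becomes `k ↦ r k + α (k mod 3)`,
and this is injective iff `gcd r s = 1` and `i ↦ r i + α i` permutes `ZMod 3`. The hypothesis
on `a, b, c` says `f (ξ) f (ξ²) = 1`, i.e. `α 1 + α 2 ≡ 0 (mod 3)`. The values of a
permutation of `ZMod 3` sum to `0`, which forces `α 0 ≡ 0`; what remains is
`r + 2 α 2 ≢ 0 (mod 3)`.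
-/

theorem ZMod.injective_mul_add_three_iff (u : ZMod 3) (w : ZMod 3 → ZMod 3)
    (hw : w 1 + w 2 = 0) :
    Function.Injective (fun i => u * i + w i) ↔ w 0 = 0 ∧ u + 2 * w 2 ≠ 0 := by
  revert u w; decide

theorem ZMod.coprime_of_injective_mul_add_comp_castHom {d s r : ℕ} [NeZero d] [NeZero s]
    {α : ZMod d → ZMod (d * s)}
    (hinj : Function.Injective (fun k : ZMod (d * s) =>
      (r : ZMod (d * s)) * k + α (ZMod.castHom (dvd_mul_right d s) (ZMod d) k))) :
    r.Coprime s := by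
  set g := r.gcd s
  obtain ⟨r', hr'⟩ : g ∣ r := Nat.gcd_dvd_left r s
  obtain ⟨s', hs'⟩ : g ∣ s := Nat.gcd_dvd_right r s
  have hs'0 : s' ≠ 0 := by rintro rfl; exact NeZero.ne s (by simpa using hs')
  -- `d * s'` is killed by `r` and by the reduction mod `d`, so it collides with `0`
  have hzero : ((d * s' : ℕ) : ZMod (d * s)) = 0 := by
    rw [← Nat.cast_zero]
    refine hinj ?_
    have hr : ((r * (d * s') : ℕ) : ZMod (d * s)) = 0 := by
      rw [ZMod.natCast_eq_zero_iff]
      exact ⟨r', by rw [hr', hs']; ring⟩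
    have hπ0 : ZMod.castHom (dvd_mul_right d s) (ZMod d) ((d * s' : ℕ) : ZMod (d * s)) = 0 := by
      rw [map_natCast, ZMod.natCast_eq_zero_iff]; exact dvd_mul_right _ _
    push_cast at hr hπ0 ⊢
    simp only [hr, hπ0, map_zero, mul_zero]
  rw [ZMod.natCast_eq_zero_iff, Nat.mul_dvd_mul_iff_left (Nat.pos_of_neZero d), hs'] at hzero
  exact Nat.dvd_one.mp
    ((Nat.mul_dvd_mul_iff_right (Nat.pos_of_ne_zero hs'0)).mp (by rwa [one_mul]))

theorem ZMod.injective_mul_add_comp_castHom_of_coprime {d s r : ℕ} [NeZero d]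
    {α : ZMod d → ZMod (d * s)} (hcop : r.Coprime s)
    (hinj : Function.Injective (fun i : ZMod d =>
      (r : ZMod d) * i + ZMod.castHom (dvd_mul_right d s) (ZMod d) (α i))) :
    Function.Injective (fun k : ZMod (d * s) =>
      (r : ZMod (d * s)) * k + α (ZMod.castHom (dvd_mul_right d s) (ZMod d) k)) := by
  set π := ZMod.castHom (dvd_mul_right d s) (ZMod d)
  intro k k' hkk
  have hπk : π k = π k' :=
    hinj (by simpa only [map_add, map_mul, map_natCast] using congrArg π hkk)
  simp only [hπk, add_left_inj] at hkk
  obtain ⟨K, rfl⟩ := ZMod.intCast_surjective k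
  obtain ⟨K', rfl⟩ := ZMod.intCast_surjective k'
  simp only [map_intCast, ZMod.intCast_eq_intCast_iff_dvd_sub] at hπk ⊢
  obtain ⟨t, ht⟩ := hπk
  rw [← Int.cast_natCast r, ← Int.cast_mul, ← Int.cast_mul,
    ZMod.intCast_eq_intCast_iff_dvd_sub, ← mul_sub, ht] at hkk
  have hcop' : IsCoprime (s : ℤ) r := by
    rw [Int.isCoprime_iff_gcd_eq_one, Int.gcd_natCast_natCast]; exact hcop.symm
  have hrt : (s : ℤ) ∣ r * t :=
    Int.dvd_of_mul_dvd_mul_left (a := d) (by exact_mod_cast NeZero.ne d)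
      (by convert hkk using 1 <;> push_cast <;> ring)
  rw [ht, Nat.cast_mul]
  exact mul_dvd_mul_left _ (hcop'.dvd_of_dvd_mul_left hrt)

theorem ZMod.injective_mul_add_comp_castHom_iff {d s : ℕ} [NeZero d] [NeZero s] (r : ℕ)
    (α : ZMod d → ZMod (d * s)) :
    Function.Injective (fun k : ZMod (d * s) =>
        (r : ZMod (d * s)) * k + α (ZMod.castHom (dvd_mul_right d s) (ZMod d) k)) ↔
      r.Coprime s ∧ Function.Injective (fun i : ZMod d =>
        (r : ZMod d) * i + ZMod.castHom (dvd_mul_right d s) (ZMod d) (α i)) := by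
  set π := ZMod.castHom (dvd_mul_right d s) (ZMod d)
  refine ⟨fun hinj => ⟨ZMod.coprime_of_injective_mul_add_comp_castHom hinj, ?_⟩,
    fun ⟨hcop, hinj⟩ => ZMod.injective_mul_add_comp_castHom_of_coprime hcop hinj⟩
  rw [Finite.injective_iff_surjective] at hinj ⊢
  have hcomm : (fun i : ZMod d => (r : ZMod d) * i + π (α i)) ∘ π =
      π ∘ (fun k : ZMod (d * s) => (r : ZMod (d * s)) * k + α (π k)) := by
    funext k; simp only [Function.comp_apply, map_add, map_mul, map_natCast]
  exact Function.Surjective.of_comp (g := π) (hcomm ▸ (ZMod.ringHom_surjective π).comp hinj)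

theorem eval_quadratic_mul_eval_sq {R : Type*} [CommRing R] {ξ : R} (hξ : ξ ^ 2 + ξ + 1 = 0)
    (a b c : R) :
    (C a * X ^ 2 + C b * X + C c).eval ξ * (C a * X ^ 2 + C b * X + C c).eval (ξ ^ 2) =
      a ^ 2 + b ^ 2 + c ^ 2 - a * b - b * c - c * a := by
  simp only [eval_add, eval_mul, eval_pow, eval_C, eval_X]
  linear_combination (a ^ 2 * ξ ^ 4 + (a * b - a ^ 2) * ξ ^ 3 + a * c * ξ ^ 2
    + (a ^ 2 - a * b + b ^ 2 - a * c) * ξ + (a * b + a * c + b * c - a ^ 2 - b ^ 2)) * hξ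

theorem IsPrimitiveRoot.sq_add_self_add_one {R : Type*} [CommRing R] [IsDomain R] {ξ : R}
    (hξ : IsPrimitiveRoot ξ 3) : ξ ^ 2 + ξ + 1 = 0 := by
  have := hξ.geom_sum_eq_zero (by norm_num)
  simp only [Finset.sum_range_succ, Finset.sum_range_zero, pow_zero, pow_one, zero_add] at this
  linear_combination this

theorem pow_pow_eq_one_iff_natCast_eq_zero {M : Type*} [Monoid M] {x : M} {d s : ℕ} (hs : 0 < s)
    (hx : orderOf x = d * s) (v : ℕ) : (x ^ v) ^ s = 1 ↔ (v : ZMod d) = 0 := by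
  rw [ZMod.natCast_eq_zero_iff, ← pow_mul, ← orderOf_dvd_iff_pow_eq_one, hx,
    Nat.mul_dvd_mul_iff_right hs]

theorem pow_eq_pow_of_natCast_eq {M : Type*} [Monoid M] {x : M} {n a b : ℕ} (hx : orderOf x = n)
    (h : (a : ZMod n) = b) : x ^ a = x ^ b := by
  rw [ZMod.natCast_eq_natCast_iff' _ _ n, ← hx] at h
  rw [← pow_mod_orderOf, h, pow_mod_orderOf]

theorem injective_pow_val {M : Type*} [Monoid M] {x : M} {n : ℕ} [NeZero n] (hx : orderOf x = n) :
    Function.Injective fun k : ZMod n => x ^ k.val := fun k k' h =>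
  ZMod.val_injective n (pow_injOn_Iio_orderOf (hx ▸ ZMod.val_lt k) (hx ▸ ZMod.val_lt k') h)

theorem forall_zpow_eq_imp_iff {G₀ : Type*} [GroupWithZero G₀] {x y : G₀} (hx : x ≠ 0)
    {d : ℕ} (hd : d ∣ orderOf x) {v : ℕ} (hv : x ^ v = y) (p : ZMod d → Prop) :
    (∀ b : ℤ, x ^ b = y → p b) ↔ p v := by
  subst hv
  refine ⟨fun h => by simpa using h v (zpow_natCast x v), fun hv b hb => ?_⟩
  have hmod : (orderOf (Units.mk0 x hx) : ℤ) ∣ v - b :=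
    orderOf_dvd_sub_iff_zpow_eq_zpow.mpr (by ext; simp [hb])
  rw [← orderOf_units, Units.val_mk0] at hmod
  convert hv using 1
  rw [← Int.cast_natCast (R := ZMod d) v, ZMod.intCast_eq_intCast_iff_dvd_sub]
  exact (Int.natCast_dvd_natCast.mpr hd).trans hmod

theorem ind_conditions_iff {G₀ : Type*} [GroupWithZero G₀] {γ : G₀} (hγ0 : γ ≠ 0) {s : ℕ}
    (hs : 0 < s) (hγ : orderOf γ = 3 * s) (r v w : ℕ) :
    ((γ ^ v) ^ s = 1 ∧ (∀ b : ℤ, γ ^ b = γ ^ v → (3 : ℤ) ∣ b) ∧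
        (∀ b : ℤ, γ ^ b = (γ ^ w) ^ 2 → ¬ (3 : ℤ) ∣ (r : ℤ) + b)) ↔
      (v : ZMod 3) = 0 ∧ (r : ZMod 3) + 2 * (w : ZMod 3) ≠ 0 := by
  have h3 : ∀ z : ℤ, (3 : ℤ) ∣ z ↔ (z : ZMod 3) = 0 := fun z =>
    (ZMod.intCast_zmod_eq_zero_iff_dvd z 3).symm
  have hd : 3 ∣ orderOf γ := ⟨s, hγ⟩
  simp only [h3, Int.cast_add, Int.cast_natCast]
  rw [pow_pow_eq_one_iff_natCast_eq_zero hs hγ, forall_zpow_eq_imp_iff hγ0 hd rfl (· = 0),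
    forall_zpow_eq_imp_iff hγ0 hd (v := 2 * w) (by rw [mul_comm, pow_mul])
      (fun z => ¬ (r : ZMod 3) + z = 0)]
  push_cast
  exact and_self_left

theorem not_injective_pow_mul_comp_pow {M₀ : Type*} [MonoidWithZero M₀] [NoZeroDivisors M₀]
    {r s : ℕ} (hr : r ≠ 0) {h : M₀ → M₀} {y : M₀} (hy : y ≠ 0) (hhy : h (y ^ s) = 0) :
    ¬ Function.Injective (fun x => x ^ r * h (x ^ s)) := fun hinj =>
  hy (hinj (by simp [hhy, hr]))

section FiniteField

variable {F : Type*} [Field F] [Fintype F] {γ : F} {n : ℕ}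

theorem exists_pow_val_eq_of_orderOf_eq [NeZero n] (hγ : orderOf γ = n)
    (hn : n + 1 = Fintype.card F) {x : F} (hx : x ≠ 0) : ∃ k : ZMod n, γ ^ k.val = x := by
  classical
  have hγ0 : γ ≠ 0 := by rintro rfl; simp [NeZero.ne n |>.symm] at hγ
  have himage : Finset.univ.image (fun k : ZMod n => γ ^ k.val) = Finset.univ.erase 0 := by
    refine Finset.eq_of_subset_of_card_le (fun y => ?_) ?_
    · simp only [Finset.mem_image, Finset.mem_univ, true_and, Finset.mem_erase, and_true]
      rintro ⟨k, rfl⟩; exact pow_ne_zero _ hγ0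
    · rw [Finset.card_image_of_injective _ (injective_pow_val hγ),
        Finset.card_erase_of_mem (Finset.mem_univ _)]
      simp only [Finset.card_univ, ZMod.card]
      omega
  have hx' : x ∈ Finset.univ.image (fun k : ZMod n => γ ^ k.val) :=
    himage ▸ Finset.mem_erase.mpr ⟨hx, Finset.mem_univ x⟩
  simpa using hx'

theorem bijective_iff_injective_of_pow_val [NeZero n] (hγ : orderOf γ = n)
    (hn : n + 1 = Fintype.card F) {P : F → F} {H : ZMod n → ZMod n} (hP0 : P 0 = 0)
    (hPH : ∀ k, P (γ ^ k.val) = γ ^ (H k).val) :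
    Function.Bijective P ↔ Function.Injective H := by
  have hγ0 : γ ≠ 0 := by rintro rfl; simp [NeZero.ne n |>.symm] at hγ
  have hcases : ∀ x : F, x = 0 ∨ ∃ k : ZMod n, γ ^ k.val = x := fun x =>
    (eq_or_ne x 0).imp_right (exists_pow_val_eq_of_orderOf_eq hγ hn)
  rw [← Finite.injective_iff_bijective]
  refine ⟨fun hP k k' h => injective_pow_val hγ (hP (by simp only [hPH, h])),
    fun hH x y hxy => ?_⟩
  rcases hcases x with rfl | ⟨k, rfl⟩ <;> rcases hcases y with rfl | ⟨k', rfl⟩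
  · rfl
  · exact absurd (hP0.symm.trans (hxy.trans (hPH k'))) (pow_ne_zero _ hγ0).symm
  · exact absurd (hxy.trans hP0 ▸ (hPH k).symm) (pow_ne_zero _ hγ0)
  · rw [hPH, hPH] at hxy
    rw [hH (injective_pow_val hγ hxy)]

/-- The criterion "`x ^ r h (x ^ s)` permutes `F` iff `gcd r s = 1` and `x ^ r h x ^ s` permutes
the `d`-th roots of unity", written in terms of exponents of the generator `γ`. -/
theorem bijective_pow_mul_comp_pow_iff {d s r : ℕ} [NeZero d] [NeZero s]
    (hr : r ≠ 0) (hγ : orderOf γ = d * s) (hcard : d * s + 1 = Fintype.card F) (h : F → F)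
    (α : ZMod d → ZMod (d * s)) (hα : ∀ i : ZMod d, γ ^ (α i).val = h ((γ ^ s) ^ i.val)) :
    Function.Bijective (fun x => x ^ r * h (x ^ s)) ↔
      r.Coprime s ∧ Function.Injective (fun i : ZMod d =>
        (r : ZMod d) * i + ZMod.castHom (dvd_mul_right d s) (ZMod d) (α i)) := by
  set π := ZMod.castHom (dvd_mul_right d s) (ZMod d)
  have hγs : orderOf (γ ^ s) = d :=
    ((IsPrimitiveRoot.orderOf γ).pow (hγ ▸ Nat.pos_of_neZero _)
      (by rw [hγ, mul_comm])).eq_orderOf.symm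
  have hPH : ∀ k : ZMod (d * s), (γ ^ k.val) ^ r * h ((γ ^ k.val) ^ s) =
      γ ^ ((r : ZMod (d * s)) * k + α (π k)).val := by
    intro k
    have hk : (γ ^ k.val) ^ s = (γ ^ s) ^ (π k).val := by
      rw [← pow_mul, mul_comm, pow_mul, ZMod.castHom_apply, ZMod.cast_eq_val, ZMod.val_natCast]
      simpa only [hγs] using (pow_mod_orderOf (γ ^ s) k.val).symm
    rw [hk, ← hα, ← pow_mul, ← pow_add]
    refine pow_eq_pow_of_natCast_eq hγ ?_
    simp [ZMod.natCast_val, ZMod.cast_id, mul_comm]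
  rw [bijective_iff_injective_of_pow_val hγ hcard (by simp [hr]) hPH]
  exact ZMod.injective_mul_add_comp_castHom_iff r α

end FiniteField

theorem stmt_8_general (q : ℕ)
    (F : Type*) [Field F] [Fintype F] (hF : Fintype.card F = q)
    (s : ℕ) (hs : 0 < s) (hls : q - 1 = 3 * s)
    (γ : F) (hγ : orderOf γ = q - 1)
    (ξ : F) (hξ : ξ = γ ^ s)
    (a b c : F) (habc : a ^ 2 + b ^ 2 + c ^ 2 - a * b - b * c - c * a = 1)
    (f : Polynomial F) (hf : f = C a * X ^ 2 + C b * X + C c)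
    (r : ℕ) (hr : 0 < r)
    (A : ℕ → F) (hA : ∀ i, A i = f.eval (ξ ^ i)) :
    Function.Bijective (fun x : F => x ^ r * f.eval (x ^ s)) ↔
      (Nat.gcd r s = 1 ∧
       (∀ i ≤ 2, A i ≠ 0) ∧
       A 0 ^ s = 1 ∧
       (∀ b' : ℤ, γ ^ b' = A 0 → (3 : ℤ) ∣ b') ∧
       (∀ b' : ℤ, γ ^ b' = A 2 ^ 2 → ¬ (3 : ℤ) ∣ ((r : ℤ) + b'))) := by
  have : NeZero s := ⟨hs.ne'⟩
  have hγ3 : orderOf γ = 3 * s := hγ.trans hls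
  have hcard : 3 * s + 1 = Fintype.card F := by omega
  have hγ0 : γ ≠ 0 := by rintro rfl; simp at hγ3; omega
  have hξ3 : IsPrimitiveRoot ξ 3 :=
    hξ ▸ (IsPrimitiveRoot.orderOf γ).pow (by omega) (by rw [hγ3, mul_comm])
  have hAξ : ∀ i, A i = f.eval ((γ ^ s) ^ i) := by simpa only [hξ] using hA
  by_cases hA0 : ∀ i ≤ 2, A i ≠ 0
  swap
  · obtain ⟨i, hi, hAi⟩ : ∃ i ≤ 2, A i = 0 := by simpa using hA0
    refine iff_of_false (fun hP => ?_) (fun h => h.2.1 i hi hAi)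
    refine not_injective_pow_mul_comp_pow (h := fun y => f.eval y) hr.ne' (pow_ne_zero i hγ0) ?_
      hP.injective
    rw [← pow_mul, mul_comm, pow_mul, ← hAξ, hAi]
  choose α hα using fun i : ZMod 3 =>
    exists_pow_val_eq_of_orderOf_eq hγ3 hcard (hA0 i.val (by have := i.val_lt; omega))
  have hα0 : γ ^ (α 0).val = A 0 := hα 0
  have hα2 : γ ^ (α 2).val = A 2 := hα 2
  have hα12 : ((α 1).val : ZMod 3) + ((α 2).val : ZMod 3) = 0 := by
    have hA12 : A 1 * A 2 = 1 := by
      rw [hA, hA, hf, pow_one, eval_quadratic_mul_eval_sq hξ3.sq_add_self_add_one, habc]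
    rw [← Nat.cast_add, ← pow_pow_eq_one_iff_natCast_eq_zero hs hγ3, pow_add, hα 1, hα 2]
    exact congrArg (· ^ s) hA12 |>.trans (one_pow s)
  have hcond := ind_conditions_iff hγ0 hs hγ3 r (α 0).val (α 2).val
  rw [hα0, hα2] at hcond
  refine (bijective_pow_mul_comp_pow_iff hr.ne' hγ3 hcard (fun y => f.eval y) α
    (fun i => (hα i).trans (hAξ _))).trans ?_
  simp only [ZMod.castHom_apply, ZMod.cast_eq_val]
  rw [ZMod.injective_mul_add_three_iff _ _ hα12, ← hcond]
  exact and_congr_right fun _ => (and_iff_right hA0).symm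

/-- Suppose `q - 1 = 3s`, and `f(x) = a x^2 + b x + c` with
`a² + b² + c² - ab - bc - ca = 1`. Then `P(x) = x^r f(x^s)` is a permutation
polynomial over `𝔽_q` iff `gcd(r,s) = 1`, `A_i ≠ 0` for `i = 0,1,2`, `A_0^s = 1`,
`3 ∣ Ind_γ(A_0)`, and `3 ∤ r + Ind_γ(A_2²)`. -/
theorem stmt_8 (p m q : ℕ) (hp : p.Prime) (hm : 0 < m) (hq : q = p ^ m)
    (F : Type*) [Field F] [Fintype F] (hF : Fintype.card F = q)
    (s : ℕ) (hs : 0 < s) (hls : q - 1 = 3 * s)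
    (γ : F) (hγ : orderOf γ = q - 1)
    (ξ : F) (hξ : ξ = γ ^ s)
    (a b c : F) (habc : a ^ 2 + b ^ 2 + c ^ 2 - a * b - b * c - c * a = 1)
    (f : Polynomial F) (hf : f = C a * X ^ 2 + C b * X + C c)
    (r : ℕ) (hr : 0 < r)
    (A : ℕ → F) (hA : ∀ i, A i = f.eval (ξ ^ i)) :
    Function.Bijective (fun x : F => x ^ r * f.eval (x ^ s)) ↔
      (Nat.gcd r s = 1 ∧
       (∀ i ≤ 2, A i ≠ 0) ∧
       A 0 ^ s = 1 ∧
       (∀ b' : ℤ, γ ^ b' = A 0 → (3 : ℤ) ∣ b') ∧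
       (∀ b' : ℤ, γ ^ b' = A 2 ^ 2 → ¬ (3 : ℤ) ∣ ((r : ℤ) + b'))) :=
  stmt_8_general q F hF s hs hls γ hγ ξ hξ a b c habc f hf r hr A hA
end

section
/- Let p be an odd prime, q = p^m, and suppose q − 1 = l·s where l ≥ 3 is odd, s is a positive integer, e is a positive integer with gcd(l, e) = 1, and r is a positive integer with r < q − 1. If P(x) = x^r (x^{es} + 1) is a permutation polynomial over 𝔽_q, then gcd(r, s) = 1, p divides 2^s − 1, and l does not divide 2r + es. -/
/-!
Write `f x = x ^ r * (x ^ (e * s) + 1)`. Nontrivial torsion points of `Fˣ`, which Cauchy's theorem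
provides, produce collisions of `f`: if `x ^ gcd r s = 1` then `f x = 2 = f 1`, and if `x ^ l = 1`
with `l ∣ 2 * r + e * s` then `f x⁻¹ = f x`, forcing `x ^ 2 = 1`, impossible for odd `l`.

For the middle claim, `f` permutes `Fˣ`, so by Wilson `∏ f x = ∏ x = -1`. Since `s` is even and
coprime to `r`, `r` is odd and `∏ x ^ r = -1`, hence `∏ (x ^ (e * s) + 1) = 1`. Writing
`x = ω ^ i` for a generator `ω`, the element `β = ω ^ (e * s)` is a primitive `l`-th root of
unity, so this product is `(∏_{i < l} (β ^ i + 1)) ^ s = 2 ^ s`, the inner product being the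
value of `-(X ^ l - 1) = -∏ (X - β ^ i)` at `X = -1`. Thus `2 ^ s = 1` in characteristic `p`.
-/

open Finset Polynomial

theorem exists_ne_one_orderOf_dvd_of_dvd_card {G : Type*} [Group G] [Fintype G] {n : ℕ}
    (hn : n ≠ 1) (hdvd : n ∣ Fintype.card G) : ∃ x : G, x ≠ 1 ∧ orderOf x ∣ n := by
  obtain ⟨p, hp, hpn⟩ := Nat.exists_prime_and_dvd hn
  have : Fact p.Prime := ⟨hp⟩
  obtain ⟨x, hx⟩ := exists_prime_orderOf_dvd_card p (hpn.trans hdvd)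
  refine ⟨x, ?_, hx ▸ hpn⟩
  rintro rfl
  exact hp.one_lt.ne' (orderOf_one.symm.trans hx).symm

theorem prod_eq_prod_range_pow_of_forall_mem_zpowers {G M : Type*} [Group G] [Fintype G]
    [CommMonoid M] {ω : G} (hω : ∀ x, x ∈ Subgroup.zpowers ω) (f : G → M) :
    ∏ x, f x = ∏ i ∈ range (orderOf ω), f (ω ^ i) := by
  classical
  rw [← IsCyclic.image_range_orderOf hω, prod_image]
  intro i hi j hj hij
  exact pow_injOn_Iio_orderOf (by simpa using hi) (by simpa using hj) hij

theorem prod_range_mul_pow_of_pow_eq_one {M N : Type*} [Monoid M] [CommMonoid N] {β : M} {l : ℕ}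
    (hβ : β ^ l = 1) (g : M → N) (s : ℕ) :
    ∏ i ∈ range (l * s), g (β ^ i) = (∏ i ∈ range l, g (β ^ i)) ^ s := by
  induction s with
  | zero => simp
  | succ s ih =>
    rw [Nat.mul_succ, prod_range_add, ih, pow_succ]
    simp only [pow_add, pow_mul, hβ, one_pow, one_mul]

theorem IsPrimitiveRoot.prod_range_pow_add_one {R : Type*} [CommRing R] [IsDomain R] {β : R}
    {l : ℕ} (hβ : IsPrimitiveRoot β l) (hl : Odd l) : ∏ i ∈ range l, (β ^ i + 1) = 2 := by
  classical
  have himage : (range l).image (β ^ ·) = nthRootsFinset l (1 : R) := by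
    refine eq_of_subset_of_card_le (fun x hx => ?_) ?_
    · obtain ⟨i, -, rfl⟩ := mem_image.1 hx
      rw [Polynomial.mem_nthRootsFinset hl.pos, ← pow_mul, mul_comm, pow_mul, hβ.pow_eq_one,
        one_pow]
    · rw [hβ.card_nthRootsFinset, card_image_of_injOn hβ.injOn_pow, card_range]
  have h := congrArg (eval (-1)) (X_pow_sub_one_eq_prod hl.pos hβ)
  rw [← himage, prod_image fun i hi j hj => hβ.injOn_pow (by simpa using hi) (by simpa using hj)]
    at h
  simp only [eval_sub, eval_pow, eval_X, eval_one, eval_prod, eval_C, hl.neg_one_pow] at h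
  have : ∏ i ∈ range l, (-1 - β ^ i) = -∏ i ∈ range l, (β ^ i + 1) := by
    simp only [← neg_add', prod_neg, card_range, hl.neg_one_pow, neg_one_mul, add_comm]
  linear_combination h + this

theorem inv_pow_mul_inv_pow_add_one {K : Type*} [Field K] {x : K} (hx0 : x ≠ 0) {r k : ℕ}
    (hx : x ^ (2 * r + k) = 1) : x⁻¹ ^ r * (x⁻¹ ^ k + 1) = x ^ r * (x ^ k + 1) := by
  rw [pow_add, two_mul, pow_add] at hx
  rw [inv_pow, inv_pow]
  field_simp
  linear_combination (-1 - x ^ k) * hx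

theorem prod_units_comp_eq_of_bijective {G₀ : Type*} [CommGroupWithZero G₀] [Fintype G₀]
    [DecidableEq G₀] {f : G₀ → G₀} (hf : Function.Bijective f) (h0 : f 0 = 0) :
    ∏ x : G₀ˣ, f x = ∏ x : G₀ˣ, (x : G₀) := by
  have hne : ∀ x : G₀ˣ, f x ≠ 0 := fun x hx => x.ne_zero (hf.injective (hx.trans h0.symm))
  let φ : G₀ˣ → G₀ˣ := fun x => Units.mk0 (f x) (hne x)
  have hφ : Function.Bijective φ := by
    refine ⟨fun x y hxy => Units.ext (hf.injective (congrArg Units.val hxy)), fun y => ?_⟩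
    obtain ⟨x, hx⟩ := hf.surjective y
    have hx0 : x ≠ 0 := by rintro rfl; exact y.ne_zero (hx.symm.trans h0)
    exact ⟨Units.mk0 x hx0, Units.ext hx⟩
  exact Fintype.prod_bijective φ hφ _ _ fun _ => rfl

section FiniteField

variable {K : Type*} [Field K] [Fintype K] [DecidableEq K]

theorem FiniteField.prod_units_val_eq_neg_one : ∏ x : Kˣ, (x : K) = -1 := by
  rw [← Units.coe_prod, FiniteField.prod_univ_units_id_eq_neg_one, Units.val_neg, Units.val_one]

theorem prod_units_pow_add_one {l s e : ℕ} (hK : Fintype.card Kˣ = l * s) (hl : Odd l)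
    (hle : l.Coprime e) :
    ∏ x : Kˣ, ((x : K) ^ (e * s) + 1) = 2 ^ s := by
  obtain ⟨ω, hω⟩ := IsCyclic.exists_generator (α := Kˣ)
  have hord : orderOf (ω : K) = l * s := by
    rw [orderOf_units, orderOf_eq_card_of_forall_mem_zpowers hω, Nat.card_eq_fintype_card, hK]
  have hβ : IsPrimitiveRoot ((ω : K) ^ (e * s)) l := by
    rw [mul_comm, pow_mul]
    exact ((IsPrimitiveRoot.orderOf (ω : K)).pow (hord ▸ hK ▸ Fintype.card_pos)
      (hord.trans (mul_comm l s))).pow_of_coprime e hle.symm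
  rw [prod_eq_prod_range_pow_of_forall_mem_zpowers hω, ← orderOf_units, hord]
  simp only [Units.val_pow_eq_pow_val, ← pow_mul, mul_comm _ (e * s)]
  simp only [pow_mul (ω : K) (e * s)]
  rw [prod_range_mul_pow_of_pow_eq_one hβ.pow_eq_one (· + 1), hβ.prod_range_pow_add_one hl]

theorem gcd_eq_one_of_injective_pow_mul_pow_add_one {r k s : ℕ} (hs : s ∣ Fintype.card Kˣ)
    (hk : s ∣ k) (hf : Function.Injective fun x : K => x ^ r * (x ^ k + 1)) : r.gcd s = 1 := by
  by_contra h
  obtain ⟨x, hx1, hx⟩ := exists_ne_one_orderOf_dvd_of_dvd_card h ((r.gcd_dvd_right s).trans hs)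
  have hxr : (x : K) ^ r = 1 := by
    rw [← Units.val_pow_eq_pow_val, orderOf_dvd_iff_pow_eq_one.mp (hx.trans (r.gcd_dvd_left s)),
      Units.val_one]
  have hxk : (x : K) ^ k = 1 := by
    rw [← Units.val_pow_eq_pow_val,
      orderOf_dvd_iff_pow_eq_one.mp (hx.trans ((r.gcd_dvd_right s).trans hk)), Units.val_one]
  exact hx1 (Units.ext (hf (by simp [hxr, hxk])))

theorem two_pow_eq_one_of_bijective_pow_mul_pow_add_one {l s e r : ℕ}
    (hK : Fintype.card Kˣ = l * s) (hl : Odd l) (hle : l.Coprime e) (hr : Odd r)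
    (hf : Function.Bijective fun x : K => x ^ r * (x ^ (e * s) + 1)) : (2 : K) ^ s = 1 := by
  have hprod := prod_units_comp_eq_of_bijective hf (by simp [hr.pos.ne'])
  rw [prod_mul_distrib, prod_pow, FiniteField.prod_units_val_eq_neg_one, hr.neg_one_pow,
    prod_units_pow_add_one hK hl hle] at hprod
  linear_combination -hprod

theorem not_dvd_two_mul_add_of_injective_pow_mul_pow_add_one {l r k : ℕ} (hl1 : l ≠ 1)
    (hl : Odd l) (hlK : l ∣ Fintype.card Kˣ)
    (hf : Function.Injective fun x : K => x ^ r * (x ^ k + 1)) : ¬ l ∣ 2 * r + k := by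
  intro hdvd
  obtain ⟨x, hx1, hx⟩ := exists_ne_one_orderOf_dvd_of_dvd_card hl1 hlK
  have hxinv : (x : K)⁻¹ = x := by
    refine hf (inv_pow_mul_inv_pow_add_one x.ne_zero ?_)
    rw [← Units.val_pow_eq_pow_val, orderOf_dvd_iff_pow_eq_one.mp (hx.trans hdvd), Units.val_one]
  have hx2 : x ^ 2 = 1 := by
    rw [sq, ← inv_eq_iff_mul_eq_one]
    exact Units.ext (by simpa using hxinv)
  have : orderOf x ∣ Nat.gcd 2 l := Nat.dvd_gcd (orderOf_dvd_of_pow_eq_one hx2) hx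
  rw [Nat.coprime_two_left.mpr hl, Nat.dvd_one, orderOf_eq_one_iff] at this
  exact hx1 this

end FiniteField

theorem stmt_10_general (p m q : ℕ) (hp : p.Prime) (hodd : Odd p)
    (hq : q = p ^ m)
    (F : Type*) [Field F] [Fintype F] (hF : Fintype.card F = q)
    (l s e r : ℕ) (hl3 : 3 ≤ l) (hlodd : Odd l)
    (hls : q - 1 = l * s) (hle : Nat.gcd l e = 1)
    (hPP : Function.Bijective (fun x : F => x ^ r * (x ^ (e * s) + 1))) :
    Nat.gcd r s = 1 ∧ p ∣ 2 ^ s - 1 ∧ ¬ l ∣ 2 * r + e * s := by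
  classical
  have hcard : Fintype.card Fˣ = l * s := by rw [Fintype.card_units, hF, hls]
  have hgcd : r.gcd s = 1 := gcd_eq_one_of_injective_pow_mul_pow_add_one
    (hcard ▸ dvd_mul_left s l) (dvd_mul_left s e) hPP.injective
  have hs_even : Even s := by
    have : Even (l * s) := hls ▸ Nat.Odd.sub_odd (hq ▸ hodd.pow) odd_one
    exact (Nat.even_mul.mp this).resolve_left (Nat.not_even_iff_odd.mpr hlodd)
  have hr : Odd r := Nat.coprime_two_right.mp (Nat.Coprime.coprime_dvd_right hs_even.two_dvd hgcd)
  have : Fact p.Prime := ⟨hp⟩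
  have : CharP F p := charP_of_card_eq_prime_pow (hF.trans hq)
  have h2s := two_pow_eq_one_of_bijective_pow_mul_pow_add_one hcard hlodd hle hr hPP
  refine ⟨hgcd, (CharP.cast_eq_zero_iff F p _).mp ?_,
    not_dvd_two_mul_add_of_injective_pow_mul_pow_add_one (by omega) hlodd
      (hcard ▸ dvd_mul_right l s) hPP.injective⟩
  rw [Nat.cast_sub Nat.one_le_two_pow, Nat.cast_pow, Nat.cast_two, h2s, Nat.cast_one, sub_self]

/-- Let `p` be an odd prime, `q = p^m`, `q - 1 = l·s` with `l ≥ 3`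
odd, `gcd(l, e) = 1`, and `0 < r < q - 1`. If `P(x) = x^r (x^{es} + 1)` is a
permutation polynomial over `𝔽_q`, then `gcd(r,s) = 1`, `p ∣ 2^s - 1`, and
`l ∤ 2r + es`. -/
theorem stmt_10 (p m q : ℕ) (hp : p.Prime) (hodd : Odd p) (hm : 0 < m)
    (hq : q = p ^ m)
    (F : Type*) [Field F] [Fintype F] (hF : Fintype.card F = q)
    (l s e r : ℕ) (hl3 : 3 ≤ l) (hlodd : Odd l) (hs : 0 < s)
    (hls : q - 1 = l * s) (he : 0 < e) (hle : Nat.gcd l e = 1)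
    (hr : 0 < r) (hr' : r < q - 1)
    (hPP : Function.Bijective (fun x : F => x ^ r * (x ^ (e * s) + 1))) :
    Nat.gcd r s = 1 ∧ p ∣ 2 ^ s - 1 ∧ ¬ l ∣ 2 * r + e * s :=
  stmt_10_general p m q hp hodd hq F hF l s e r hl3 hlodd hls hle hPP
end

section
/- Let p be an odd prime, q = p^m, and suppose q − 1 = l·s where l ≥ 3 is odd and s is even. Let e, r be positive integers with gcd(l, e) = 1, r < q − 1, and l dividing r + es. Let γ be a primitive element of 𝔽_q, ξ = γ^s, and A_i = ξ^{ei} + 1 for 0 ≤ i ≤ l − 1. Then P(x) = x^r (x^{es} + 1) is a permutation polynomial over 𝔽_q if and only if: gcd(r, s) = 1, p divides 2^s − 1, l does not divide r, the elements A_1^s, A_2^s, …, A_{l−1}^s are pairwise distinct, and for every k = 1, …, l − 1 and all integers b, b' with γ^b = A_k and γ^{b'} = 2, one has b + kr ≢ b' (mod l). -/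
/-!
Write `x = γ ^ t` and let `b i` be an exponent of `A i = ξ ^ (e * i) + 1`. Then
`P (γ ^ t) = γ ^ (t * r + b (t % l))`, so `P` permutes `𝔽_q` iff `t ↦ t * r + b (t % l)` is
injective modulo `q - 1 = l * s`; splitting `t = i + l * u`, this holds iff `gcd(r, s) = 1` and
`i ↦ i * r + b i` is injective modulo `l`. The identity `ξ ^ (e * i) * A (l - i) = A i` and
`l ∣ r + e * s` give `b (l - i) ≡ b i + i * r [MOD l]`, which turns this injectivity into the last
two conditions. The other two follow: `l ∣ r` would force `l ∣ gcd(r, s)`, and summing the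
permutation `i ↦ i * r + b i` of `ZMod l` gives `l ∣ ∑ b i`, hence
`2 ^ s = (∏ A i) ^ s = γ ^ (s * ∑ b i) = 1`, as `∏ (ζ + 1) = 2` over the `l`-th roots of unity
`ζ` for odd `l`.
-/

open Finset

theorem ZMod.sum_range_eq_sum_univ_of_injOn {n : ℕ} [NeZero n] {f : ℕ → ZMod n}
    (hf : Set.InjOn f (Set.Iio n)) : ∑ i ∈ range n, f i = ∑ x : ZMod n, x := by
  classical
  have hf' : Set.InjOn f (range n) := by rwa [coe_range]
  have himage : (range n).image f = univ :=
    eq_univ_of_card _ (by rw [card_image_of_injOn hf', card_range, ZMod.card])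
  rw [← himage, sum_image hf']

section Arithmetic

variable {l s r e : ℕ} {b c : ℕ → ℕ}

theorem coprime_of_injOn_mul_add_mod (hl : 0 < l) (hs : 0 < s)
    (h : Set.InjOn (fun t => ((t * r + c (t % l) : ℕ) : ZMod (l * s))) (Set.Iio (l * s))) :
    r.Coprime s := by
  set d := r.gcd s
  obtain ⟨r', hr'⟩ : d ∣ r := Nat.gcd_dvd_left r s
  obtain ⟨s', hs'⟩ : d ∣ s := Nat.gcd_dvd_right r s
  have hs'0 : 0 < s' := Nat.pos_of_mul_pos_left (hs' ▸ hs)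
  by_contra hcop
  have hs'lt : s' < s := by
    have : 1 < d := by have := Nat.gcd_pos_of_pos_right r hs; unfold Nat.Coprime at hcop; omega
    rw [hs']
    exact lt_mul_left hs'0 this
  -- `t = l * s'` collides with `t = 0`, since `l * s' * r` is a multiple of `l * s`
  have hcollide : l * s' = 0 := by
    refine h (Nat.mul_lt_mul_of_pos_left hs'lt hl) (mul_pos hl hs) ?_
    have : l * s' * r = l * s * r' := by rw [hr', hs']; ring
    simp only [this, Nat.mul_mod_right, Nat.cast_add, Nat.cast_mul (l * s), ZMod.natCast_self]
    simp
  exact (mul_pos hl hs'0).ne' hcollide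

theorem injOn_mul_add_of_injOn_mul_add_mod (hs : 0 < s) (hrs : r.Coprime s)
    (h : Set.InjOn (fun t => ((t * r + c (t % l) : ℕ) : ZMod (l * s))) (Set.Iio (l * s))) :
    Set.InjOn (fun i => ((i * r + c i : ℕ) : ZMod l)) (Set.Iio l) := by
  intro i (hi : i < l) j (hj : j < l) hij
  obtain ⟨D, hD⟩ := Nat.modEq_iff_dvd.mp ((ZMod.natCast_eq_natCast_iff _ _ _).mp hij)
  have : NeZero s := ⟨hs.ne'⟩
  -- shifting `i` by `l * u`, with `u * r ≡ D [MOD s]`, lands on the image of `j`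
  obtain ⟨u, hus, w, hw⟩ : ∃ u < s, (s : ℤ) ∣ D - u * r := by
    refine ⟨((D : ZMod s) * (r : ZMod s)⁻¹).val, ZMod.val_lt _, ?_⟩
    rw [← ZMod.intCast_zmod_eq_zero_iff_dvd]
    push_cast
    rw [ZMod.natCast_zmod_val, mul_assoc, mul_comm _ (r : ZMod s), ZMod.coe_mul_inv_eq_one r hrs]
    ring
  have hlt : i + l * u < l * s := by
    have := Nat.mul_le_mul_left l hus
    rw [Nat.mul_succ] at this
    omega
  have hshift := h hlt (Set.mem_Iio.mpr (lt_of_lt_of_le hj (Nat.le_mul_of_pos_right l hs))) (by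
    simp only [Nat.add_mul_mod_self_left, Nat.mod_eq_of_lt hi, Nat.mod_eq_of_lt hj]
    rw [ZMod.natCast_eq_natCast_iff, Nat.modEq_iff_dvd]
    push_cast at hD ⊢
    exact ⟨w, by linear_combination hD + l * hw⟩)
  simpa [Nat.mod_eq_of_lt hi, Nat.mod_eq_of_lt hj] using congrArg (· % l) hshift

theorem injOn_mul_add_mod_of_injOn_mul_add (hl : 0 < l) (hrs : r.Coprime s)
    (h : Set.InjOn (fun i => ((i * r + c i : ℕ) : ZMod l)) (Set.Iio l)) :
    Set.InjOn (fun t => ((t * r + c (t % l) : ℕ) : ZMod (l * s))) (Set.Iio (l * s)) := by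
  intro t (ht : t < l * s) t' (ht' : t' < l * s) htt'
  replace htt' := (ZMod.natCast_eq_natCast_iff _ _ _).mp htt'
  have hmod : t % l = t' % l := by
    refine h (Nat.mod_lt t hl) (Nat.mod_lt t' hl) ((ZMod.natCast_eq_natCast_iff _ _ _).mpr ?_)
    calc t % l * r + c (t % l) ≡ t * r + c (t % l) [MOD l] :=
          ((Nat.mod_modEq t l).mul_right r).add_right _
      _ ≡ t' * r + c (t' % l) [MOD l] := htt'.of_mul_right s
      _ ≡ t' % l * r + c (t' % l) [MOD l] :=
          (((Nat.mod_modEq t' l).mul_right r).add_right _).symm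
  obtain ⟨k, hk⟩ : (l : ℤ) ∣ t' - t := Nat.modEq_iff_dvd.mp hmod
  obtain ⟨D, hD⟩ : ((l * s : ℕ) : ℤ) ∣ t' * r - t * r := by
    rw [hmod] at htt'
    exact_mod_cast Nat.modEq_iff_dvd.mp (Nat.ModEq.add_right_cancel' _ htt')
  push_cast at hD
  obtain ⟨k', hk'⟩ : (s : ℤ) ∣ k := by
    refine (Nat.isCoprime_iff_coprime.mpr hrs).symm.dvd_of_dvd_mul_left ⟨D, ?_⟩
    have hl0 : (l : ℤ) ≠ 0 := by exact_mod_cast hl.ne'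
    apply mul_left_cancel₀ hl0
    linear_combination (-(r : ℤ)) * hk + hD
  refine Nat.ModEq.eq_of_lt_of_lt (Nat.modEq_iff_dvd.mpr ⟨k', ?_⟩) ht ht'
  push_cast
  rw [hk, hk', mul_assoc]

theorem injOn_mul_add_mod_iff (hl : 0 < l) (hs : 0 < s) :
    Set.InjOn (fun t => ((t * r + c (t % l) : ℕ) : ZMod (l * s))) (Set.Iio (l * s)) ↔
      r.Coprime s ∧ Set.InjOn (fun i => ((i * r + c i : ℕ) : ZMod l)) (Set.Iio l) :=
  ⟨fun h => have hrs := coprime_of_injOn_mul_add_mod hl hs h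
      ⟨hrs, injOn_mul_add_of_injOn_mul_add_mod hs hrs h⟩,
    fun ⟨hrs, h⟩ => injOn_mul_add_mod_of_injOn_mul_add hl hrs h⟩

theorem injOn_mul_add_iff_of_reflect (hrefl : ∀ i ≤ l, (b (l - i) : ZMod l) = b i + i * r) :
    Set.InjOn (fun i => ((i * r + b i : ℕ) : ZMod l)) (Set.Iio l) ↔
      (∀ i j, 1 ≤ i → i ≤ l - 1 → 1 ≤ j → j ≤ l - 1 → i ≠ j → (b i : ZMod l) ≠ b j) ∧
      (∀ k, 1 ≤ k → k ≤ l - 1 → (b k : ZMod l) + k * r ≠ b 0) := by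
  have hreflect : ∀ i ≤ l, (((l - i) * r + b (l - i) : ℕ) : ZMod l) = b i := by
    intro i hi
    push_cast [hi, hrefl i hi]
    simp only [ZMod.natCast_self]
    ring
  constructor
  · intro h
    refine ⟨fun i j hi1 hil hj1 hjl hne hij => hne ?_, fun k hk1 hkl hk => ?_⟩
    · have := h (show l - i < l by omega) (show l - j < l by omega)
        (by simp only [hreflect i (by omega), hreflect j (by omega), hij])
      omega
    · have := h (show k < l by omega) (show 0 < l by omega) (by push_cast; rw [← hk]; ring)
      omega
  · rintro ⟨hdist, hshift⟩ i (hi : i < l) j (hj : j < l) hij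
    push_cast at hij
    by_contra hne
    rcases Nat.eq_zero_or_pos i with rfl | hi0
    · exact hshift j (by omega) (by omega) (by linear_combination -hij)
    rcases Nat.eq_zero_or_pos j with rfl | hj0
    · exact hshift i (by omega) (by omega) (by linear_combination hij)
    refine hdist (l - i) (l - j) (by omega) (by omega) (by omega) (by omega) (by omega) ?_
    rw [hrefl i hi.le, hrefl j hj.le]
    linear_combination hij

theorem not_dvd_of_coprime_of_dvd_add (hl : 1 < l) (hrs : r.Coprime s) (hle : l.Coprime e)
    (hlres : l ∣ r + e * s) : ¬ l ∣ r := fun hlr =>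
  have hls : l ∣ s := hle.dvd_of_dvd_mul_left ((Nat.dvd_add_right hlr).mp hlres)
  hl.ne' (Nat.eq_one_of_dvd_coprimes hrs hlr hls)

theorem dvd_sum_of_injOn_mul_add (hl : Odd l)
    (h : Set.InjOn (fun i => ((i * r + b i : ℕ) : ZMod l)) (Set.Iio l)) :
    l ∣ ∑ i ∈ range l, b i := by
  have : NeZero l := ⟨hl.pos.ne'⟩
  have hid : Set.InjOn (fun i : ℕ => (i : ZMod l)) (Set.Iio l) := fun i hi j hj hij =>
    ((ZMod.natCast_eq_natCast_iff _ _ _).mp hij).eq_of_lt_of_lt hi hj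
  have hsum_id : ∑ i ∈ range l, (i : ZMod l) = 0 := by
    rw [← Nat.cast_sum, ZMod.natCast_eq_zero_iff]
    exact hl.coprime_two_right.dvd_of_dvd_mul_right ⟨l - 1, sum_range_id_mul_two l⟩
  have hperm := (ZMod.sum_range_eq_sum_univ_of_injOn h).trans
    (ZMod.sum_range_eq_sum_univ_of_injOn hid).symm
  push_cast at hperm
  rw [sum_add_distrib, ← sum_mul, hsum_id, zero_mul, zero_add] at hperm
  rwa [← ZMod.natCast_eq_zero_iff, Nat.cast_sum]

end Arithmetic

theorem IsPrimitiveRoot.pow_eq_pow_iff_modEq {M : Type*} [CommMonoid M] {ζ : M} {k : ℕ}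
    (h : IsPrimitiveRoot ζ k) (hk : k ≠ 0) {a b : ℕ} : ζ ^ a = ζ ^ b ↔ a ≡ b [MOD k] := by
  rw [h.eq_orderOf]
  exact (h.isOfFinOrder hk).pow_eq_pow_iff_modEq

theorem IsPrimitiveRoot.zpow_eq_zpow_iff_modEq {G₀ : Type*} [CommGroupWithZero G₀] {ζ : G₀}
    {k : ℕ} (h : IsPrimitiveRoot ζ k) (hk : k ≠ 0) {a b : ℤ} :
    ζ ^ a = ζ ^ b ↔ a ≡ b [ZMOD k] := by
  have hζ : ζ ≠ 0 := h.ne_zero hk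
  rw [← div_eq_one_iff_eq (zpow_ne_zero _ hζ), ← zpow_sub₀ hζ, h.zpow_eq_one_iff_dvd,
    Int.modEq_iff_dvd, dvd_sub_comm]

theorem IsPrimitiveRoot.prod_pow_add_one {R : Type*} [CommRing R] [IsDomain R] {ζ : R} {n : ℕ}
    (hn : Odd n) (h : IsPrimitiveRoot ζ n) : ∏ i ∈ range n, (ζ ^ i + 1) = 2 := by
  classical
  have h2 := h.pow_add_pow_eq_prod_add_mul hn (x := 1) (y := 1)
  rw [Polynomial.nthRootsFinset_def, prod_eq_multiset_prod, Multiset.toFinset_val,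
    Multiset.dedup_eq_self.mpr h.nthRoots_one_nodup, h.nthRoots_eq (one_pow n)] at h2
  simp only [Multiset.map_map, Function.comp_def, mul_one, one_pow] at h2
  rw [← one_add_one_eq_two, h2, prod_eq_multiset_prod, range_val]
  simp only [add_comm]

theorem CharP.dvd_two_pow_sub_one (R : Type*) [Ring R] (p : ℕ) [CharP R p] {s : ℕ}
    (h : (2 : R) ^ s = 1) : p ∣ 2 ^ s - 1 := by
  refine (Nat.modEq_iff_dvd' Nat.one_le_two_pow).mp ((CharP.natCast_eq_natCast R p).mp ?_)
  push_cast
  exact h.symm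

theorem pow_add_one_ne_zero_of_pow_eq_one {R : Type*} [CommRing R] {ζ : R} {l : ℕ}
    (hζ : ζ ^ l = 1) (hl : Odd l) (h2 : (2 : R) ≠ 0) (n : ℕ) : ζ ^ n + 1 ≠ 0 := by
  intro h
  have := congrArg (· ^ l) (eq_neg_of_add_eq_zero_left h)
  rw [← pow_mul, mul_comm, pow_mul, hζ, one_pow, hl.neg_one_pow] at this
  exact h2 (by linear_combination this)

section FiniteField

variable {F : Type*} [Field F] [Fintype F] {γ : F}

theorem IsPrimitiveRoot.exists_pow_eq_of_ne_zero (hγ : IsPrimitiveRoot γ (Fintype.card F - 1))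
    {x : F} (hx : x ≠ 0) : ∃ t < Fintype.card F - 1, γ ^ t = x :=
  have : NeZero (Fintype.card F - 1) := ⟨by have := Fintype.one_lt_card (α := F); omega⟩
  hγ.eq_pow_of_pow_eq_one (FiniteField.pow_card_sub_one_eq_one x hx)

theorem FiniteField.bijective_iff_injOn_exponent (hγ : IsPrimitiveRoot γ (Fintype.card F - 1))
    {f : F → F} {g : ℕ → ℕ} (hf0 : f 0 = 0) (hfg : ∀ t, f (γ ^ t) = γ ^ g t) :
    Function.Bijective f ↔
      Set.InjOn (fun t => (g t : ZMod (Fintype.card F - 1))) (Set.Iio (Fintype.card F - 1)) := by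
  have hN : Fintype.card F - 1 ≠ 0 := by have := Fintype.one_lt_card (α := F); omega
  have hfg' : ∀ t t', f (γ ^ t) = f (γ ^ t') ↔ (g t : ZMod (Fintype.card F - 1)) = g t' := by
    intro t t'
    rw [hfg, hfg, hγ.pow_eq_pow_iff_modEq hN, ZMod.natCast_eq_natCast_iff]
  have hne : ∀ {x}, x ≠ 0 → f x ≠ 0 := fun hx => by
    obtain ⟨t, -, rfl⟩ := hγ.exists_pow_eq_of_ne_zero hx
    rw [hfg]
    exact pow_ne_zero _ (hγ.ne_zero hN)
  rw [← Finite.injective_iff_bijective]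
  refine ⟨fun hf t ht t' ht' htt' => hγ.pow_inj ht ht' (hf ((hfg' t t').mpr htt')),
    fun hg x y hxy => ?_⟩
  rcases eq_or_ne x 0 with rfl | hx <;> rcases eq_or_ne y 0 with rfl | hy
  · rfl
  · exact absurd (hf0 ▸ hxy).symm (hne hy)
  · exact absurd (hf0 ▸ hxy) (hne hx)
  · obtain ⟨t, ht, rfl⟩ := hγ.exists_pow_eq_of_ne_zero hx
    obtain ⟨t', ht', rfl⟩ := hγ.exists_pow_eq_of_ne_zero hy
    rw [hg ht ht' ((hfg' t t').mp hxy)]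

theorem IsPrimitiveRoot.exists_pow_eq_pow_mul_add_one {l s : ℕ}
    (hγ : IsPrimitiveRoot γ (Fintype.card F - 1)) (hcard : Fintype.card F - 1 = l * s)
    (hl : Odd l) (h2 : (2 : F) ≠ 0) (e : ℕ) :
    ∃ b : ℕ → ℕ, ∀ i, γ ^ b i = (γ ^ s) ^ (e * i) + 1 := by
  have hξ : (γ ^ s) ^ l = 1 := by rw [← pow_mul, mul_comm, ← hcard, hγ.pow_eq_one]
  choose b hb using fun i => hγ.exists_pow_eq_of_ne_zero
    (pow_add_one_ne_zero_of_pow_eq_one hξ hl h2 (e * i))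
  exact ⟨b, fun i => (hb i).2⟩

end FiniteField

section Index

variable {l s e r : ℕ} {b : ℕ → ℕ}

theorem IsPrimitiveRoot.pow_pow_eq_pow_pow_iff {M : Type*} [CommMonoid M] {γ : M}
    (hγ : IsPrimitiveRoot γ (l * s)) (hls : l * s ≠ 0) {m n : ℕ} :
    (γ ^ m) ^ s = (γ ^ n) ^ s ↔ (m : ZMod l) = n := by
  rw [← pow_mul, ← pow_mul, hγ.pow_eq_pow_iff_modEq hls, ZMod.natCast_eq_natCast_iff,
    Nat.ModEq.mul_right_cancel_iff' (right_ne_zero_of_mul hls)]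

theorem IsPrimitiveRoot.intCast_eq_of_zpow_eq {G₀ : Type*} [CommGroupWithZero G₀] {γ : G₀}
    (hγ : IsPrimitiveRoot γ (l * s)) (hls : l * s ≠ 0) {m n : ℤ} (h : γ ^ m = γ ^ n) :
    (m : ZMod l) = n := by
  rw [ZMod.intCast_eq_intCast_iff]
  have := (hγ.zpow_eq_zpow_iff_modEq hls).mp h
  push_cast at this
  exact this.of_mul_right s

theorem IsPrimitiveRoot.forall_zpow_eq_not_modEq_iff {G₀ : Type*} [CommGroupWithZero G₀]
    {γ x y : G₀} (hγ : IsPrimitiveRoot γ (l * s)) (hls : l * s ≠ 0) {m n : ℕ}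
    (hm : γ ^ m = x) (hn : γ ^ n = y) (c : ℤ) :
    (∀ z z' : ℤ, γ ^ z = x → γ ^ z' = y → ¬ z + c ≡ z' [ZMOD l]) ↔ (m : ZMod l) + c ≠ n := by
  simp only [← ZMod.intCast_eq_intCast_iff, Int.cast_add]
  refine ⟨fun h hmn => h m n (by rwa [zpow_natCast]) (by rwa [zpow_natCast]) (by simpa), ?_⟩
  rintro h z z' hz hz' hzz'
  rw [← zpow_natCast] at hm hn
  rw [hγ.intCast_eq_of_zpow_eq hls (hz.trans hm.symm),
    hγ.intCast_eq_of_zpow_eq hls (hz'.trans hn.symm)] at hzz'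
  exact h (by simpa using hzz')

theorem IsPrimitiveRoot.two_pow_eq_one {F : Type*} [Field F] {γ : F}
    (hγ : IsPrimitiveRoot γ (l * s)) (hls : l * s ≠ 0) (hl : Odd l) (hle : l.Coprime e)
    (hb : ∀ i, γ ^ b i = (γ ^ s) ^ (e * i) + 1) (hsum : l ∣ ∑ i ∈ range l, b i) :
    (2 : F) ^ s = 1 := by
  have hζ : IsPrimitiveRoot ((γ ^ s) ^ e) l :=
    (hγ.pow (Nat.pos_of_ne_zero hls) (mul_comm l s)).pow_of_coprime e (Nat.coprime_comm.mp hle)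
  calc (2 : F) ^ s = (∏ i ∈ range l, γ ^ b i) ^ s := by
        simp only [hb, pow_mul, hζ.prod_pow_add_one hl]
    _ = γ ^ ((∑ i ∈ range l, b i) * s) := by rw [prod_pow_eq_pow_sum, pow_mul]
    _ = 1 := (hγ.pow_eq_one_iff_dvd _).mpr (Nat.mul_dvd_mul_right hsum s)

theorem pow_mul_pow_add_one_eq_pow {R : Type*} [CommSemiring R] {γ : R} (hγ : γ ^ (l * s) = 1)
    (hb : ∀ i, γ ^ b i = (γ ^ s) ^ (e * i) + 1) (t : ℕ) :
    (γ ^ t) ^ r * ((γ ^ t) ^ (e * s) + 1) = γ ^ (t * r + b (t % l)) := by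
  have hξ : (γ ^ s) ^ l = 1 := by rw [← pow_mul, mul_comm, hγ]
  have : (γ ^ t) ^ (e * s) = (γ ^ s) ^ (e * (t % l)) := by
    calc (γ ^ t) ^ (e * s) = ((γ ^ s) ^ t) ^ e := by ring
      _ = ((γ ^ s) ^ (t % l)) ^ e := by rw [← pow_eq_pow_mod t hξ]
      _ = (γ ^ s) ^ (e * (t % l)) := by ring
  rw [this, ← hb, pow_add, pow_mul]

theorem IsPrimitiveRoot.natCast_apply_sub_eq {R : Type*} [CommSemiring R] {γ : R}
    (hγ : IsPrimitiveRoot γ (l * s)) (hls : l * s ≠ 0)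
    (hb : ∀ i, γ ^ b i = (γ ^ s) ^ (e * i) + 1) (hlres : l ∣ r + e * s) {i : ℕ} (hi : i ≤ l) :
    (b (l - i) : ZMod l) = b i + i * r := by
  -- with `ξ = γ ^ s`: `ξ ^ (e * i) * (ξ ^ (e * (l - i)) + 1) = ξ ^ (e * i) + 1`, as `ξ ^ l = 1`
  have hpow : γ ^ (s * (e * i) + b (l - i)) = γ ^ b i := by
    have hξ : (γ ^ s) ^ (e * l) = 1 := by
      rw [← pow_mul, show s * (e * l) = l * s * e by ring, pow_mul, hγ.pow_eq_one, one_pow]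
    rw [pow_add, pow_mul, hb, hb, mul_add, mul_one, ← pow_add, ← mul_add, Nat.add_sub_cancel' hi,
      hξ, add_comm]
  have hmod := ((hγ.pow_eq_pow_iff_modEq hls).mp hpow).of_mul_right s
  have hres : ((r + e * s : ℕ) : ZMod l) = 0 := (ZMod.natCast_eq_zero_iff _ _).mpr hlres
  rw [← ZMod.natCast_eq_natCast_iff] at hmod
  push_cast at hmod hres
  linear_combination hmod - (i : ZMod l) * hres

theorem IsPrimitiveRoot.bijective_pow_mul_pow_add_one_iff {F : Type*} [Field F] [Fintype F]
    {γ : F} (hγ : IsPrimitiveRoot γ (l * s)) (hcard : Fintype.card F - 1 = l * s) (hr : r ≠ 0)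
    (hb : ∀ i, γ ^ b i = (γ ^ s) ^ (e * i) + 1) :
    Function.Bijective (fun x : F => x ^ r * (x ^ (e * s) + 1)) ↔
      r.Coprime s ∧ Set.InjOn (fun i => ((i * r + b i : ℕ) : ZMod l)) (Set.Iio l) := by
  have hls : 0 < l * s := hcard ▸ Nat.sub_pos_of_lt Fintype.one_lt_card
  rw [FiniteField.bijective_iff_injOn_exponent (hcard ▸ hγ) (by simp [hr])
    (pow_mul_pow_add_one_eq_pow hγ.pow_eq_one hb), hcard,
    injOn_mul_add_mod_iff (Nat.pos_of_mul_pos_right hls) (Nat.pos_of_mul_pos_left hls)]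

end Index

theorem stmt_14_general (p m q : ℕ) (hp : p.Prime) (hodd : Odd p)
    (hq : q = p ^ m)
    (F : Type*) [Field F] [Fintype F] (hF : Fintype.card F = q)
    (l s e r : ℕ) (hl3 : 3 ≤ l) (hlodd : Odd l)
    (hls : q - 1 = l * s) (hle : Nat.gcd l e = 1)
    (hr : 0 < r) (hlres : l ∣ r + e * s)
    (γ : F) (hγ : orderOf γ = q - 1)
    (ξ : F) (hξ : ξ = γ ^ s)
    (A : ℕ → F) (hA : ∀ i, A i = ξ ^ (e * i) + 1) :
    Function.Bijective (fun x : F => x ^ r * (x ^ (e * s) + 1)) ↔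
      (Nat.gcd r s = 1 ∧
       p ∣ 2 ^ s - 1 ∧
       ¬ l ∣ r ∧
       (∀ i j : ℕ, 1 ≤ i → i ≤ l - 1 → 1 ≤ j → j ≤ l - 1 → i ≠ j →
          A i ^ s ≠ A j ^ s) ∧
       (∀ k : ℕ, 1 ≤ k → k ≤ l - 1 → ∀ b b' : ℤ,
          γ ^ b = A k → γ ^ b' = (2 : F) →
            ¬ (b + (k : ℤ) * (r : ℤ) ≡ b' [ZMOD (l : ℤ)]))) := by
  have : Fact p.Prime := ⟨hp⟩
  have : CharP F p := charP_of_card_eq_prime_pow (hF.trans hq)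
  have hcard : Fintype.card F - 1 = l * s := hF ▸ hls
  have hγF : IsPrimitiveRoot γ (Fintype.card F - 1) := hF ▸ hγ ▸ IsPrimitiveRoot.orderOf γ
  have hγ' : IsPrimitiveRoot γ (l * s) := hcard ▸ hγF
  have hls0 : l * s ≠ 0 := hcard ▸ Nat.sub_ne_zero_of_lt Fintype.one_lt_card
  have h2 : (2 : F) ≠ 0 :=
    Ring.two_ne_zero (by rw [ringChar.eq F p]; rintro rfl; exact absurd hodd (by decide))
  obtain ⟨b, hb⟩ := hγF.exists_pow_eq_pow_mul_add_one hcard hlodd h2 e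
  have hbA : ∀ i, γ ^ b i = A i := fun i => by rw [hb, hA, hξ]
  have h20 : γ ^ b 0 = 2 := by rw [hb, mul_zero, pow_zero, one_add_one_eq_two]
  have hreflect := injOn_mul_add_iff_of_reflect fun i hi =>
    hγ'.natCast_apply_sub_eq hls0 hb hlres hi
  simp only [ne_eq] at hreflect
  simp only [← hbA, ← h20, ne_eq, hγ'.pow_pow_eq_pow_pow_iff hls0,
    hγ'.forall_zpow_eq_not_modEq_iff hls0 rfl rfl, Int.cast_mul, Int.cast_natCast]
  rw [hγ'.bijective_pow_mul_pow_add_one_iff hcard hr.ne' hb, ← hreflect]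
  exact ⟨fun ⟨hrs, hinj⟩ =>
      ⟨hrs, CharP.dvd_two_pow_sub_one F p
        (hγ'.two_pow_eq_one hls0 hlodd hle hb (dvd_sum_of_injOn_mul_add hlodd hinj)),
        not_dvd_of_coprime_of_dvd_add (by omega) hrs hle hlres, hinj⟩,
    fun ⟨hrs, _, _, hinj⟩ => ⟨hrs, hinj⟩⟩

/-- Let `p` be an odd prime, `q = p^m`, `q - 1 = l·s` with `l ≥ 3`
odd and `s` even, `gcd(l, e) = 1`, `0 < r < q - 1`, and `l ∣ r + es`. With
`A_i = ξ^{ei} + 1`, the binomial `P(x) = x^r (x^{es} + 1)` is a permutation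
polynomial over `𝔽_q` iff `gcd(r,s) = 1`, `p ∣ 2^s - 1`, `l ∤ r`, the elements
`A_1^s, …, A_{l-1}^s` are pairwise distinct, and for every `k = 1, …, l - 1` and
all integers `b, b'` with `γ^b = A_k` and `γ^{b'} = 2`, one has
`b + kr ≢ b' (mod l)`. -/
theorem stmt_14 (p m q : ℕ) (hp : p.Prime) (hodd : Odd p) (hm : 0 < m)
    (hq : q = p ^ m)
    (F : Type*) [Field F] [Fintype F] (hF : Fintype.card F = q)
    (l s e r : ℕ) (hl3 : 3 ≤ l) (hlodd : Odd l) (hseven : Even s) (hs : 0 < s)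
    (hls : q - 1 = l * s) (he : 0 < e) (hle : Nat.gcd l e = 1)
    (hr : 0 < r) (hr' : r < q - 1) (hlres : l ∣ r + e * s)
    (γ : F) (hγ : orderOf γ = q - 1)
    (ξ : F) (hξ : ξ = γ ^ s)
    (A : ℕ → F) (hA : ∀ i, A i = ξ ^ (e * i) + 1) :
    Function.Bijective (fun x : F => x ^ r * (x ^ (e * s) + 1)) ↔
      (Nat.gcd r s = 1 ∧
       p ∣ 2 ^ s - 1 ∧
       ¬ l ∣ r ∧
       (∀ i j : ℕ, 1 ≤ i → i ≤ l - 1 → 1 ≤ j → j ≤ l - 1 → i ≠ j →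
          A i ^ s ≠ A j ^ s) ∧
       (∀ k : ℕ, 1 ≤ k → k ≤ l - 1 → ∀ b b' : ℤ,
          γ ^ b = A k → γ ^ b' = (2 : F) →
            ¬ (b + (k : ℤ) * (r : ℤ) ≡ b' [ZMOD (l : ℤ)]))) :=
  stmt_14_general p m q hp hodd hq F hF l s e r hl3 hlodd hls hle hr hlres γ hγ ξ hξ A hA
end
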